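/- arXiv:2312.07005 — 11 statements merged into one kernel-verified Lean document; each statement's English description precedes it below -/
import Mathlib

section
/- Let G be a minimally 2-edge-connected simple graph of order n ≥ 6. Then the number of edges of G satisfies |E(G)| ≤ 2(n-2), with equality if and only if G is isomorphic to the complete bipartite graph K_{2,n-2}. -/
/-- `G` is `t`-edge-connected: removing fewer than `t` edges always leaves a
connected graph. -/
def IsTEdgeConnected {V : Type*} (t : ℕ) (G : SimpleGraph V) : Prop :=
  ∀ s : Finset (Sym2 V), s.card < t → (G.deleteEdges (↑s : Set (Sym2 V))).Connected

/-- `G` is minimally `t`-edge-connected: it is `t`-edge-connected and deleting any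
edge yields a graph that is not `t`-edge-connected. -/
def MinimallyTEdgeConnected {V : Type*} (t : ℕ) (G : SimpleGraph V) : Prop :=
  IsTEdgeConnected t G ∧ ∀ e ∈ G.edgeSet, ¬ IsTEdgeConnected t (G.deleteEdges {e})

open SimpleGraph Set

section Helpers

variable {V : Type*} {W : Type*}

/-- Walking stays in a set closed under adjacency. -/
lemma walk_stay {H : SimpleGraph V} {Z : Set V}
    (hZ : ∀ ⦃u v : V⦄, H.Adj u v → u ∈ Z → v ∈ Z) :
    ∀ {a b : V}, H.Walk a b → a ∈ Z → b ∈ Z := by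
  intro a b w
  induction w with
  | nil => exact id
  | cons h' p ih => exact fun ha => ih (hZ h' ha)

lemma reach_stay {H : SimpleGraph V} {Z : Set V}
    (hZ : ∀ ⦃u v : V⦄, H.Adj u v → u ∈ Z → v ∈ Z)
    {a b : V} (h : H.Reachable a b) (ha : a ∈ Z) : b ∈ Z := by
  obtain ⟨w⟩ := h
  exact walk_stay hZ w ha

lemma not_connected_of_sep {H : SimpleGraph V} {Z : Set V}
    (h1 : Z.Nonempty) (h2 : Zᶜ.Nonempty)
    (hZ : ∀ ⦃u v : V⦄, H.Adj u v → u ∈ Z → v ∈ Z) : ¬ H.Connected := by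
  intro hc
  obtain ⟨z, hz⟩ := h1
  obtain ⟨w, hw⟩ := h2
  exact hw (reach_stay hZ (hc.preconnected z w) hz)

/-- Reachability transfers along walks staying in a closed set whose inner edges
are present in another graph. -/
lemma reach_transfer {H H' : SimpleGraph V} {Z : Set V}
    (hZ : ∀ ⦃u v : V⦄, H.Adj u v → u ∈ Z → v ∈ Z)
    (hE : ∀ ⦃u v : V⦄, H.Adj u v → u ∈ Z → H'.Adj u v) :
    ∀ {a b : V}, H.Walk a b → a ∈ Z → H'.Reachable a b := by
  intro a b w
  induction w with
  | nil => exact fun _ => Reachable.refl _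
  | cons h' p ih => exact fun ha => (hE h' ha).reachable.trans (ih (hZ h' ha))

/-- Compression of walks along a vertex map. -/
lemma reach_map {H : SimpleGraph V} {H' : SimpleGraph W} (φ : V → W)
    (hφ : ∀ ⦃u v : V⦄, H.Adj u v → φ u = φ v ∨ H'.Adj (φ u) (φ v)) :
    ∀ {a b : V}, H.Walk a b → H'.Reachable (φ a) (φ b) := by
  intro a b w
  induction w with
  | nil => exact Reachable.refl _
  | cons h' p ih =>
    rcases hφ h' with h | h
    · exact h ▸ ih
    · exact h.reachable.trans ih

lemma reach_split {H : SimpleGraph V} {x y : V} :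
    ∀ {a b : V}, H.Walk a b →
      (H.deleteEdges {s(x,y)}).Reachable a b ∨ (H.deleteEdges {s(x,y)}).Reachable a x ∨
        (H.deleteEdges {s(x,y)}).Reachable a y := by
  intro a b w
  induction w with
  | nil => exact Or.inl (Reachable.refl _)
  | @cons a c b h' p ih =>
    by_cases hac : s(a, c) = s(x, y)
    · rw [Sym2.eq_iff] at hac
      rcases hac with ⟨rfl, rfl⟩ | ⟨rfl, rfl⟩
      · exact Or.inr (Or.inl (Reachable.refl _))
      · exact Or.inr (Or.inr (Reachable.refl _))
    · have hadj : (H.deleteEdges {s(x,y)}).Adj a c := by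
        rw [deleteEdges_adj]
        exact ⟨h', by simpa using hac⟩
      rcases ih with h | h | h
      · exact Or.inl (hadj.reachable.trans h)
      · exact Or.inr (Or.inl (hadj.reachable.trans h))
      · exact Or.inr (Or.inr (hadj.reachable.trans h))

lemma del_nonedge {G : SimpleGraph V} {c : Sym2 V} (h : c ∉ G.edgeSet) :
    G.deleteEdges {c} = G := by
  rw [deleteEdges_eq_self]
  exact Set.disjoint_singleton_right.mpr h

end Helpers

section Side

variable {V : Type*}

/-- A "side" of a 2-edge-cut `{e, f}`. -/
structure Side (G : SimpleGraph V) (e f : Sym2 V) (A : Set V) : Prop where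
  ne : A.Nonempty
  nec : Aᶜ.Nonempty
  closed : ∀ ⦃u v : V⦄, G.Adj u v → u ∈ A → v ∉ A → s(u,v) = e ∨ s(u,v) = f
  reachA : ∀ u ∈ A, ∀ v ∈ A, (G.deleteEdges {e,f}).Reachable u v
  reachAc : ∀ u ∈ Aᶜ, ∀ v ∈ Aᶜ, (G.deleteEdges {e,f}).Reachable u v

lemma Side.compl {G : SimpleGraph V} {e f : Sym2 V} {A : Set V} (h : Side G e f A) :
    Side G e f Aᶜ where
  ne := h.nec
  nec := by simpa using h.ne
  closed := by
    intro u v hadj hu hv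
    rw [Sym2.eq_swap (a := u)]
    exact h.closed hadj.symm (by simpa using hv) hu
  reachA := h.reachAc
  reachAc := by simpa using h.reachA

lemma Side.closed' {G : SimpleGraph V} {e f : Sym2 V} {A : Set V} (h : Side G e f A)
    ⦃u v : V⦄ (hadj : (G.deleteEdges {e,f}).Adj u v) (hu : u ∈ A) : v ∈ A := by
  by_contra hv
  rw [deleteEdges_adj] at hadj
  rcases h.closed hadj.1 hu hv with h' | h' <;> simp [h'] at hadj

lemma Side.symm_pair {G : SimpleGraph V} {e f : Sym2 V} {A : Set V} (h : Side G e f A) :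
    Side G f e A where
  ne := h.ne
  nec := h.nec
  closed := fun _ _ hadj hu hv => (h.closed hadj hu hv).symm
  reachA := by
    have : ({f, e} : Set (Sym2 V)) = {e, f} := Set.pair_comm f e
    rw [this]; exact h.reachA
  reachAc := by
    have : ({f, e} : Set (Sym2 V)) = {e, f} := Set.pair_comm f e
    rw [this]; exact h.reachAc

lemma exists_side {G : SimpleGraph V} [Nonempty V] {e f : Sym2 V}
    (hconn : (G.deleteEdges {e}).Connected)
    (hdis : ¬ (G.deleteEdges {e, f}).Connected) : ∃ A : Set V, Side G e f A := by
  induction f using Sym2.ind with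
  | _ x y =>
  set K := G.deleteEdges {e, s(x,y)} with hK
  have hKdef : K = (G.deleteEdges {e}).deleteEdges {s(x,y)} := by
    rw [deleteEdges_deleteEdges]
    rfl
  have claim1 : ∀ a : V, K.Reachable a x ∨ K.Reachable a y := by
    intro a
    obtain ⟨w⟩ := hconn.preconnected a x
    rcases reach_split (x := x) (y := y) w with h | h | h
    · rw [hKdef]; exact Or.inl h
    · rw [hKdef]; exact Or.inl h
    · rw [hKdef]; exact Or.inr h
  have hnp : ¬ K.Preconnected := by
    intro hp
    exact hdis ⟨hp⟩
  rw [SimpleGraph.Preconnected] at hnp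
  push_neg at hnp
  obtain ⟨a, b, hab⟩ := hnp
  have claim2 : ¬ K.Reachable x y := by
    intro hxy
    apply hab
    rcases claim1 a with h | h <;> rcases claim1 b with h' | h'
    · exact h.trans h'.symm
    · exact (h.trans hxy).trans h'.symm
    · exact (h.trans hxy.symm).trans h'.symm
    · exact h.trans h'.symm
  refine ⟨{v | K.Reachable v x}, ?_, ?_, ?_, ?_, ?_⟩
  · exact ⟨x, Reachable.refl x⟩
  · exact ⟨y, fun h => claim2 (Reachable.symm h)⟩
  · intro u v hadj hu hv
    by_contra hc
    push_neg at hc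
    have : K.Adj u v := by
      rw [hK, deleteEdges_adj]
      refine ⟨hadj, ?_⟩
      intro hmem
      simp only [Set.mem_insert_iff, Set.mem_singleton_iff] at hmem
      tauto
    exact hv (this.symm.reachable.trans hu)
  · intro u hu v hv
    exact hu.trans (Reachable.symm hv)
  · intro u hu v hv
    have hu' : K.Reachable u y := (claim1 u).resolve_left hu
    have hv' : K.Reachable v y := (claim1 v).resolve_left hv
    exact hu'.trans (Reachable.symm hv')

/-- Both edges of a proper 2-cut cross the side. -/
lemma Side.cross_f {G : SimpleGraph V} {e f : Sym2 V} {A : Set V} (hS : Side G e f A)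
    (hconn : (G.deleteEdges {e}).Connected) :
    ∃ a b : V, G.Adj a b ∧ a ∈ A ∧ b ∉ A ∧ f = s(a,b) := by
  by_contra hc
  push_neg at hc
  apply not_connected_of_sep hS.ne hS.nec _ hconn
  intro u v hadj hu
  by_contra hv
  rw [deleteEdges_adj] at hadj
  rcases hS.closed hadj.1 hu hv with h | h
  · simp [h] at hadj
  · exact hc u v hadj.1 hu hv h.symm

end Side

section MinBasics

variable {V : Type*}

lemma M2conn {G : SimpleGraph V} (hG : MinimallyTEdgeConnected 2 G) : G.Connected := by
  have := hG.1 ∅ (by simp)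
  simpa using this

lemma M2conn_del_one {G : SimpleGraph V} (hG : MinimallyTEdgeConnected 2 G) (c : Sym2 V) :
    (G.deleteEdges {c}).Connected := by
  have := hG.1 {c} (by simp)
  simpa using this

lemma M2exists_partner {G : SimpleGraph V} (hG : MinimallyTEdgeConnected 2 G) {g : Sym2 V}
    (hg : g ∈ G.edgeSet) :
    ∃ h, h ∈ G.edgeSet ∧ h ≠ g ∧ ¬ (G.deleteEdges {g, h}).Connected := by
  have hni := hG.2 g hg
  rw [IsTEdgeConnected] at hni
  push_neg at hni
  obtain ⟨s, hslt, hdis⟩ := hni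
  interval_cases h : s.card
  · rw [Finset.card_eq_zero] at h
    subst h
    simp only [Finset.coe_empty, deleteEdges_empty] at hdis
    exact absurd (M2conn_del_one hG g) hdis
  · rw [Finset.card_eq_one] at h
    obtain ⟨c, rfl⟩ := h
    rw [Finset.coe_singleton, deleteEdges_deleteEdges] at hdis
    have hgc : ({g} ∪ {c} : Set (Sym2 V)) = {g, c} := by
      rw [Set.singleton_union]
    rw [hgc] at hdis
    have hcg : c ≠ g := by
      intro hh
      apply hdis
      rw [hh]
      have h2 : ({g, g} : Set (Sym2 V)) = {g} := by simp
      rw [h2]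
      exact M2conn_del_one hG g
    have hcE : c ∈ G.edgeSet := by
      by_contra hcE
      apply hdis
      have h2 : ({g, c} : Set (Sym2 V)) = {c} ∪ {g} := by
        rw [Set.union_comm]; rfl
      rw [h2, ← deleteEdges_deleteEdges, del_nonedge hcE]
      exact M2conn_del_one hG g
    exact ⟨c, hcE, hcg, hdis⟩

lemma M2degree_two_le {G : SimpleGraph V} [Fintype V] [DecidableRel G.Adj]
    (hG : MinimallyTEdgeConnected 2 G) (hcard : 2 ≤ Fintype.card V) (v : V) :
    2 ≤ G.degree v := by
  classical
  have hex : ∀ (H : SimpleGraph V), H.Connected → ∃ u, H.Adj v u := by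
    intro H hH
    obtain ⟨w, hw⟩ := Fintype.exists_ne_of_one_lt_card (by omega) v
    obtain ⟨p⟩ := hH.preconnected v w
    cases p with
    | nil => exact absurd rfl hw
    | cons h' p => exact ⟨_, h'⟩
  have h1 : 0 < G.degree v := by
    rw [G.degree_pos_iff_exists_adj v]
    exact hex G (M2conn hG)
  have h2 : G.degree v ≠ 1 := by
    intro h1'
    rw [SimpleGraph.degree, Finset.card_eq_one] at h1'
    obtain ⟨u, hu⟩ := h1'
    obtain ⟨z, hz⟩ := hex (G.deleteEdges {s(v,u)}) (M2conn_del_one hG _)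
    rw [deleteEdges_adj] at hz
    have hzz : z ∈ G.neighborFinset v := by
      rw [SimpleGraph.mem_neighborFinset]; exact hz.1
    rw [hu, Finset.mem_singleton] at hzz
    subst hzz
    simp at hz
  omega

end MinBasics

section Counting

variable {V : Type*}

/-- Edges of `G` with both endpoints in `A`. -/
def inE (G : SimpleGraph V) (A : Set V) : Set (Sym2 V) :=
  {c | c ∈ G.edgeSet ∧ ∀ v ∈ c, v ∈ A}

lemma mem_inE_pair {G : SimpleGraph V} {A : Set V} {u v : V} :
    s(u,v) ∈ inE G A ↔ G.Adj u v ∧ u ∈ A ∧ v ∈ A := by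
  constructor
  · rintro ⟨hE, hall⟩
    exact ⟨hE, hall u (by simp), hall v (by simp)⟩
  · rintro ⟨hadj, hu, hv⟩
    refine ⟨hadj, ?_⟩
    intro w hw
    rw [Sym2.mem_iff] at hw
    rcases hw with rfl | rfl <;> assumption

lemma inE_not_mem {G : SimpleGraph V} {A : Set V} {c : Sym2 V} (b : V)
    (hb : b ∈ c) (hbA : b ∉ A) : c ∉ inE G A := by
  rintro ⟨-, hall⟩
  exact hbA (hall b hb)

/-- The edge set of a graph with a 2-cut splits into the two sides plus the two
cut edges. -/
lemma edge_trichotomy {G : SimpleGraph V} {e f : Sym2 V} {A : Set V} (hS : Side G e f A)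
    (he : e ∈ G.edgeSet) (hf : f ∈ G.edgeSet) :
    G.edgeSet = inE G A ∪ inE G Aᶜ ∪ {e, f} := by
  ext c
  constructor
  · intro hc
    induction c using Sym2.ind with
    | _ u v =>
      have hadj : G.Adj u v := hc
      by_cases hu : u ∈ A <;> by_cases hv : v ∈ A
      · exact Or.inl (Or.inl (mem_inE_pair.mpr ⟨hadj, hu, hv⟩))
      · rcases hS.closed hadj hu hv with h | h
        · exact Or.inr (by rw [h]; simp)
        · exact Or.inr (by rw [h]; simp)
      · rcases hS.closed hadj.symm hv hu with h | h
        · rw [Sym2.eq_swap] at h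
          exact Or.inr (by rw [h]; simp)
        · rw [Sym2.eq_swap] at h
          exact Or.inr (by rw [h]; simp)
      · exact Or.inl (Or.inr (mem_inE_pair.mpr ⟨hadj, hu, hv⟩))
  · rintro ((h | h) | h)
    · exact h.1
    · exact h.1
    · rcases h with rfl | rfl <;> assumption

lemma ncard_edge_split [Finite V] {G : SimpleGraph V} {e f : Sym2 V} {A : Set V}
    (hS : Side G e f A) (he : e ∈ G.edgeSet) (hf : f ∈ G.edgeSet) (hef : e ≠ f)
    {a₁ b₁ a₂ b₂ : V} (he' : e = s(a₁,b₁)) (hf' : f = s(a₂,b₂))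
    (ha₁ : a₁ ∈ A) (hb₁ : b₁ ∉ A) (ha₂ : a₂ ∈ A) (hb₂ : b₂ ∉ A) :
    G.edgeSet.ncard = (inE G A).ncard + (inE G Aᶜ).ncard + 2 := by
  have : Finite (Sym2 V) := by infer_instance
  have heA : e ∉ inE G A := inE_not_mem b₁ (by rw [he']; simp) hb₁
  have heAc : e ∉ inE G Aᶜ := inE_not_mem a₁ (by rw [he']; simp) (by simpa using ha₁)
  have hfA : f ∉ inE G A := inE_not_mem b₂ (by rw [hf']; simp) hb₂
  have hfAc : f ∉ inE G Aᶜ := inE_not_mem a₂ (by rw [hf']; simp) (by simpa using ha₂)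
  have hdisj1 : Disjoint (inE G A) (inE G Aᶜ) := by
    rw [Set.disjoint_left]
    rintro c hc hc'
    induction c using Sym2.ind with
    | _ u v =>
      have h1 := (mem_inE_pair.mp hc).2.1
      have h2 := (mem_inE_pair.mp hc').2.1
      exact h2 h1
  have hdisj2 : Disjoint (inE G A ∪ inE G Aᶜ) ({e, f} : Set (Sym2 V)) := by
    rw [Set.disjoint_right]
    rintro c (rfl | rfl) <;> simp_all
  rw [edge_trichotomy hS he hf, Set.ncard_union_eq hdisj2 (Set.toFinite _) (Set.toFinite _),
    Set.ncard_union_eq hdisj1 (Set.toFinite _) (Set.toFinite _), Set.ncard_pair hef]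

lemma induce_edge_ncard [Finite V] (G : SimpleGraph V) (A : Set V) :
    (G.induce A).edgeSet.ncard = (inE G A).ncard := by
  have himage : Sym2.map (Subtype.val : ↥A → V) '' (G.induce A).edgeSet = inE G A := by
    ext c
    constructor
    · rintro ⟨d, hd, rfl⟩
      induction d using Sym2.ind with
      | _ α β =>
        have hadj : G.Adj ↑α ↑β := (SimpleGraph.mem_edgeSet _).mp hd
        rw [Sym2.map_pair_eq]
        exact mem_inE_pair.mpr ⟨hadj, α.2, β.2⟩
    · intro hc
      induction c using Sym2.ind with
      | _ u v =>
        obtain ⟨hadj, hu, hv⟩ := mem_inE_pair.mp hc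
        refine ⟨s((⟨u, hu⟩ : ↥A), (⟨v, hv⟩ : ↥A)), ?_, by rw [Sym2.map_pair_eq]⟩
        exact hadj
  rw [← himage, Set.ncard_image_of_injective _ (Sym2.map.injective Subtype.coe_injective)]

end Counting

section Piece

variable {V : Type*}

/-- The adjacency of the quotient piece: `A` together with an extra vertex `none`
joined to `a₁` and `a₂`. -/
def pgAdj (G : SimpleGraph V) (A : Set V) (a₁ a₂ : V) :
    Option ↥A → Option ↥A → Prop
  | some u, some v => G.Adj u.1 v.1
  | none, some u => u.1 = a₁ ∨ u.1 = a₂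
  | some u, none => u.1 = a₁ ∨ u.1 = a₂
  | none, none => False

/-- The quotient piece graph. -/
def PG (G : SimpleGraph V) (A : Set V) (a₁ a₂ : V) : SimpleGraph (Option ↥A) where
  Adj := pgAdj G A a₁ a₂
  symm := by
    constructor
    rintro (_ | u) (_ | v) h <;> simp only [pgAdj] at h ⊢
    · exact h
    · exact h
    · exact h.symm
  loopless := by
    constructor
    rintro (_ | u) h <;> simp only [pgAdj] at h
    exact G.irrefl h

@[simp] lemma PG_adj_some_some {G : SimpleGraph V} {A : Set V} {a₁ a₂ : V} {u v : ↥A} :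
    (PG G A a₁ a₂).Adj (some u) (some v) ↔ G.Adj u.1 v.1 := Iff.rfl

@[simp] lemma PG_adj_none_some {G : SimpleGraph V} {A : Set V} {a₁ a₂ : V} {u : ↥A} :
    (PG G A a₁ a₂).Adj none (some u) ↔ (u.1 = a₁ ∨ u.1 = a₂) := Iff.rfl

@[simp] lemma PG_adj_some_none {G : SimpleGraph V} {A : Set V} {a₁ a₂ : V} {u : ↥A} :
    (PG G A a₁ a₂).Adj (some u) none ↔ (u.1 = a₁ ∨ u.1 = a₂) := Iff.rfl

@[simp] lemma PG_adj_none_none {G : SimpleGraph V} {A : Set V} {a₁ a₂ : V} :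
    ¬ (PG G A a₁ a₂).Adj none none := fun h => h

lemma PG_edge_ncard [Finite V] {G : SimpleGraph V} {A : Set V} {a₁ a₂ b₁ : V}
    (ha₁ : a₁ ∈ A) (ha₂ : a₂ ∈ A) (hb₁ : b₁ ∉ A) (hne : a₁ ≠ a₂) :
    (PG G A a₁ a₂).edgeSet.ncard = (inE G A).ncard + 2 := by
  classical
  set ψ : Option ↥A → V := fun o => o.elim b₁ Subtype.val with hψ
  have hinj : Function.Injective ψ := by
    rintro (_ | u) (_ | v) h <;> simp only [hψ, Option.elim] at h
    · rfl
    · exact absurd h.symm (by rintro rfl; exact hb₁ v.2)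
    · exact absurd h (by rintro rfl; exact hb₁ u.2)
    · exact congrArg some (Subtype.ext h)
  have himage : Sym2.map ψ '' (PG G A a₁ a₂).edgeSet
      = inE G A ∪ {s(b₁, a₁), s(b₁, a₂)} := by
    ext c
    constructor
    · rintro ⟨d, hd, rfl⟩
      induction d using Sym2.ind with
      | _ o₁ o₂ =>
        match o₁, o₂ with
        | some u, some v =>
          have hadj : G.Adj u.1 v.1 := (SimpleGraph.mem_edgeSet _).mp hd
          have heq : Sym2.map ψ s(some u, some v) = s(u.1, v.1) := by
            rw [Sym2.map_pair_eq]; rfl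
          rw [heq]
          exact Or.inl (mem_inE_pair.mpr ⟨hadj, u.2, v.2⟩)
        | none, some u =>
          have heq : Sym2.map ψ s(none, some u) = s(b₁, u.1) := by
            rw [Sym2.map_pair_eq]; rfl
          rw [heq]
          rcases ((SimpleGraph.mem_edgeSet _).mp hd : u.1 = a₁ ∨ u.1 = a₂) with h | h <;>
            rw [h] <;> simp
        | some u, none =>
          have heq : Sym2.map ψ s(some u, none) = s(b₁, u.1) := by
            rw [Sym2.map_pair_eq, Sym2.eq_swap]; rfl
          rw [heq]
          rcases ((SimpleGraph.mem_edgeSet _).mp hd : u.1 = a₁ ∨ u.1 = a₂) with h | h <;>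
            rw [h] <;> simp
        | none, none => exact absurd ((SimpleGraph.mem_edgeSet _).mp hd) (by simp)
    · rintro (hc | hc)
      · induction c using Sym2.ind with
        | _ u v =>
          obtain ⟨hadj, hu, hv⟩ := mem_inE_pair.mp hc
          exact ⟨s(some ⟨u, hu⟩, some ⟨v, hv⟩), (SimpleGraph.mem_edgeSet _).mpr hadj, by rw [Sym2.map_pair_eq]; rfl⟩
      · rcases hc with rfl | rfl
        · exact ⟨s(none, some ⟨a₁, ha₁⟩), (SimpleGraph.mem_edgeSet _).mpr (Or.inl rfl), by rw [Sym2.map_pair_eq]; rfl⟩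
        · exact ⟨s(none, some ⟨a₂, ha₂⟩), (SimpleGraph.mem_edgeSet _).mpr (Or.inr rfl), by rw [Sym2.map_pair_eq]; rfl⟩
  have hdisj : Disjoint (inE G A) ({s(b₁, a₁), s(b₁, a₂)} : Set (Sym2 V)) := by
    rw [Set.disjoint_right]
    rintro c (rfl | rfl) <;> exact inE_not_mem b₁ (by simp) hb₁
  have hpairne : s(b₁, a₁) ≠ s(b₁, a₂) := by
    intro hq
    rw [Sym2.eq_iff] at hq
    rcases hq with ⟨-, h⟩ | ⟨h, -⟩
    · exact hne h
    · exact hb₁ (h ▸ ha₂)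
  calc (PG G A a₁ a₂).edgeSet.ncard
      = (Sym2.map ψ '' (PG G A a₁ a₂).edgeSet).ncard :=
        (Set.ncard_image_of_injective _ (Sym2.map.injective hinj)).symm
    _ = (inE G A).ncard + 2 := by
        rw [himage, Set.ncard_union_eq hdisj (Set.toFinite _) (Set.toFinite _),
          Set.ncard_pair hpairne]

lemma PG_card [Finite V] (A : Set V) :
    Nat.card (Option ↥A) = A.ncard + 1 := by
  rw [Finite.card_option, Nat.card_coe_set_eq]

end Piece

section Transfer

variable {V : Type*}

lemma pair_ne_of {S : Set V} {u v p q : V} (hu : u ∈ S) (hv : v ∈ S) (hq : q ∉ S) :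
    s(u,v) ≠ s(p,q) := by
  intro h
  rw [Sym2.eq_iff] at h
  rcases h with ⟨rfl, rfl⟩ | ⟨rfl, rfl⟩
  · exact hq hv
  · exact hq hu

lemma cross_id {A : Set V} {u v p q : V} (hu : u ∈ A) (hv : v ∉ A) (hp : p ∈ A) (hq : q ∉ A)
    (h : s(u,v) = s(p,q)) : u = p ∧ v = q := by
  rw [Sym2.eq_iff] at h
  rcases h with h | ⟨rfl, rfl⟩
  · exact h
  · exact absurd hp hv

lemma lift_pair_eq_iff {A : Set V} {u v p q : V} (hu : u ∈ A) (hv : v ∈ A)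
    (hp : p ∈ A) (hq : q ∈ A) :
    (s(some ⟨u,hu⟩, some ⟨v,hv⟩) : Sym2 (Option ↥A)) = s(some ⟨p,hp⟩, some ⟨q,hq⟩)
      ↔ s(u,v) = s(p,q) := by
  rw [Sym2.eq_iff, Sym2.eq_iff]
  simp [Subtype.ext_iff]

lemma lift_pair_ne_none {A : Set V} {u v w : V} {hu : u ∈ A} {hv : v ∈ A} {hw : w ∈ A} :
    (s(some ⟨u,hu⟩, some ⟨v,hv⟩) : Sym2 (Option ↥A)) ≠ s(none, some ⟨w,hw⟩) := by
  intro h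
  rw [Sym2.eq_iff] at h
  simp at h

/-- A bundled context for a 2-edge-cut with crossing representatives. -/
structure CutCtx (G : SimpleGraph V) (e f : Sym2 V) (A : Set V)
    (a₁ a₂ b₁ b₂ : V) : Prop where
  side : Side G e f A
  hef : e ≠ f
  eadj : G.Adj a₁ b₁
  fadj : G.Adj a₂ b₂
  he : e = s(a₁, b₁)
  hf : f = s(a₂, b₂)
  ha₁ : a₁ ∈ A
  ha₂ : a₂ ∈ A
  hb₁ : b₁ ∉ A
  hb₂ : b₂ ∉ A

namespace CutCtx

variable {G : SimpleGraph V} {e f : Sym2 V} {A : Set V} {a₁ a₂ b₁ b₂ : V}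

lemma e_ne_inA (X : CutCtx G e f A a₁ a₂ b₁ b₂) {u v : V} (hu : u ∈ A) (hv : v ∈ A) :
    s(u,v) ≠ e := X.he ▸ pair_ne_of hu hv X.hb₁

lemma f_ne_inA (X : CutCtx G e f A a₁ a₂ b₁ b₂) {u v : V} (hu : u ∈ A) (hv : v ∈ A) :
    s(u,v) ≠ f := X.hf ▸ pair_ne_of hu hv X.hb₂

lemma e_ne_inAc (X : CutCtx G e f A a₁ a₂ b₁ b₂) {u v : V} (hu : u ∉ A) (hv : v ∉ A) :
    s(u,v) ≠ e := by
  intro h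
  rw [X.he, Sym2.eq_iff] at h
  rcases h with ⟨rfl, rfl⟩ | ⟨rfl, rfl⟩
  · exact hu X.ha₁
  · exact hv X.ha₁

lemma f_ne_inAc (X : CutCtx G e f A a₁ a₂ b₁ b₂) {u v : V} (hu : u ∉ A) (hv : v ∉ A) :
    s(u,v) ≠ f := by
  intro h
  rw [X.hf, Sym2.eq_iff] at h
  rcases h with ⟨rfl, rfl⟩ | ⟨rfl, rfl⟩
  · exact hu X.ha₂
  · exact hv X.ha₂

lemma cross_e (X : CutCtx G e f A a₁ a₂ b₁ b₂) {u v : V} (hu : u ∈ A) (hv : v ∉ A)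
    (h : s(u,v) = e) : u = a₁ ∧ v = b₁ :=
  cross_id hu hv X.ha₁ X.hb₁ (h.trans X.he)

lemma cross_f (X : CutCtx G e f A a₁ a₂ b₁ b₂) {u v : V} (hu : u ∈ A) (hv : v ∉ A)
    (h : s(u,v) = f) : u = a₂ ∧ v = b₂ :=
  cross_id hu hv X.ha₂ X.hb₂ (h.trans X.hf)

end CutCtx

/-- Certificate of disconnection for the piece graph. -/
lemma PG_not_conn {G : SimpleGraph V} {A : Set V} {a₁ a₂ : V}
    (ha₁ : a₁ ∈ A) (ha₂ : a₂ ∈ A) {Z : Set V} (hZA : Z ⊆ A) (hZne : Z.Nonempty)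
    {D : Set (Sym2 (Option ↥A))}
    (hcr : ∀ ⦃u v : V⦄ (hu : u ∈ A) (hv : v ∈ A), G.Adj u v → u ∈ Z → v ∉ Z →
       (s(some ⟨u,hu⟩, some ⟨v,hv⟩) : Sym2 (Option ↥A)) ∈ D)
    (h1 : a₁ ∈ Z → (s(none, some ⟨a₁,ha₁⟩) : Sym2 (Option ↥A)) ∈ D)
    (h2 : a₂ ∈ Z → (s(none, some ⟨a₂,ha₂⟩) : Sym2 (Option ↥A)) ∈ D) :
    ¬ ((PG G A a₁ a₂).deleteEdges D).Connected := by
  apply not_connected_of_sep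
    (Z := {o : Option ↥A | ∃ z : ↥A, o = some z ∧ z.1 ∈ Z})
  · obtain ⟨z, hz⟩ := hZne
    exact ⟨some ⟨z, hZA hz⟩, ⟨z, hZA hz⟩, rfl, hz⟩
  · refine ⟨none, ?_⟩
    rintro ⟨z, h, -⟩
    exact Option.some_ne_none z h.symm
  · rintro o₁ o₂ hadj ⟨z, rfl, hz⟩
    rw [deleteEdges_adj] at hadj
    match o₂ with
    | none =>
      exfalso
      rcases (hadj.1 : z.1 = a₁ ∨ z.1 = a₂) with h | h
      · have hz' : (z : ↥A) = ⟨a₁, ha₁⟩ := Subtype.ext h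
        apply hadj.2
        rw [Sym2.eq_swap, hz']
        exact h1 (h ▸ hz)
      · have hz' : (z : ↥A) = ⟨a₂, ha₂⟩ := Subtype.ext h
        apply hadj.2
        rw [Sym2.eq_swap, hz']
        exact h2 (h ▸ hz)
    | some w =>
      refine ⟨w, rfl, ?_⟩
      by_contra hw
      exact hadj.2 (hcr z.2 w.2 hadj.1 hz hw)

/-- Certificate of disconnection for the induced piece. -/
lemma Ind_not_conn {G : SimpleGraph V} {A : Set V}
    {Z : Set V} (hZA : Z ⊆ A) (hZne : Z.Nonempty) {w₀ : V} (hw₀ : w₀ ∈ A) (hw₀Z : w₀ ∉ Z)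
    {D : Set (Sym2 ↥A)}
    (hcr : ∀ ⦃u v : V⦄ (hu : u ∈ A) (hv : v ∈ A), G.Adj u v → u ∈ Z → v ∉ Z →
       (s(⟨u,hu⟩, ⟨v,hv⟩) : Sym2 ↥A) ∈ D) :
    ¬ ((G.induce A).deleteEdges D).Connected := by
  apply not_connected_of_sep (Z := {z : ↥A | z.1 ∈ Z})
  · obtain ⟨z, hz⟩ := hZne
    exact ⟨⟨z, hZA hz⟩, hz⟩
  · exact ⟨⟨w₀, hw₀⟩, hw₀Z⟩
  · rintro z w hadj hz
    rw [deleteEdges_adj] at hadj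
    by_contra hw
    exact hadj.2 (hcr z.2 w.2 hadj.1 hz hw)

end Transfer

section PosTransfer

variable {V : Type*} {G : SimpleGraph V} {e f : Sym2 V} {A : Set V} {a₁ a₂ b₁ b₂ : V}

/-- The projection map to the piece. -/
noncomputable def φA (A : Set V) : V → Option ↥A := fun v =>
  letI := Classical.dec (v ∈ A)
  if h : v ∈ A then some ⟨v, h⟩ else none

lemma φA_mem {v : V} (h : v ∈ A) : φA A v = some ⟨v, h⟩ := by
  simp [φA, h]

lemma φA_not_mem {v : V} (h : v ∉ A) : φA A v = none := by
  simp [φA, h]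

/-- Generic connectivity transfer to the piece graph. -/
lemma PG_conn_key (X : CutCtx G e f A a₁ a₂ b₁ b₂)
    {Dv : Set (Sym2 V)} {D : Set (Sym2 (Option ↥A))}
    (hsrc : (G.deleteEdges Dv).Connected)
    (cond1 : ∀ ⦃u v : V⦄ (hu : u ∈ A) (hv : v ∈ A), G.Adj u v → s(u,v) ∉ Dv →
        (s(some ⟨u,hu⟩, some ⟨v,hv⟩) : Sym2 (Option ↥A)) ∉ D)
    (cond2 : e ∉ Dv → (s(none, some ⟨a₁, X.ha₁⟩) : Sym2 (Option ↥A)) ∉ D)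
    (cond3 : f ∉ Dv → (s(none, some ⟨a₂, X.ha₂⟩) : Sym2 (Option ↥A)) ∉ D) :
    ((PG G A a₁ a₂).deleteEdges D).Connected := by
  have hφ : ∀ ⦃u v : V⦄, (G.deleteEdges Dv).Adj u v →
      φA A u = φA A v ∨ ((PG G A a₁ a₂).deleteEdges D).Adj (φA A u) (φA A v) := by
    intro u v hadj
    rw [deleteEdges_adj] at hadj
    obtain ⟨hadj, hnot⟩ := hadj
    by_cases hu : u ∈ A <;> by_cases hv : v ∈ A
    · right
      rw [φA_mem hu, φA_mem hv, deleteEdges_adj]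
      exact ⟨hadj, cond1 hu hv hadj hnot⟩
    · right
      rw [φA_mem hu, φA_not_mem hv, deleteEdges_adj]
      rcases X.side.closed hadj hu hv with hEq | hEq
      · obtain ⟨rfl, rfl⟩ := X.cross_e hu hv hEq
        have hsub : (⟨u, hu⟩ : ↥A) = ⟨u, X.ha₁⟩ := rfl
        refine ⟨Or.inl rfl, ?_⟩
        rw [Sym2.eq_swap, hsub]
        exact cond2 (hEq ▸ hnot)
      · obtain ⟨rfl, rfl⟩ := X.cross_f hu hv hEq
        have hsub : (⟨u, hu⟩ : ↥A) = ⟨u, X.ha₂⟩ := rfl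
        refine ⟨Or.inr rfl, ?_⟩
        rw [Sym2.eq_swap, hsub]
        exact cond3 (hEq ▸ hnot)
    · right
      rw [φA_not_mem hu, φA_mem hv, deleteEdges_adj]
      have hcl := X.side.closed hadj.symm hv hu
      rw [Sym2.eq_swap] at hcl
      rcases hcl with hEq | hEq
      · obtain ⟨rfl, rfl⟩ := X.cross_e hv hu (by rw [Sym2.eq_swap]; exact hEq)
        have hsub : (⟨v, hv⟩ : ↥A) = ⟨v, X.ha₁⟩ := rfl
        refine ⟨Or.inl rfl, ?_⟩
        rw [hsub]
        exact cond2 (hEq ▸ hnot)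
      · obtain ⟨rfl, rfl⟩ := X.cross_f hv hu (by rw [Sym2.eq_swap]; exact hEq)
        have hsub : (⟨v, hv⟩ : ↥A) = ⟨v, X.ha₂⟩ := rfl
        refine ⟨Or.inr rfl, ?_⟩
        rw [hsub]
        exact cond3 (hEq ▸ hnot)
    · left
      rw [φA_not_mem hu, φA_not_mem hv]
  constructor
  · intro o₁ o₂
    have hsurj : ∀ o : Option ↥A, ∃ w : V, φA A w = o := by
      rintro (_ | z)
      · exact ⟨b₁, φA_not_mem X.hb₁⟩
      · exact ⟨z.1, by rw [φA_mem z.2]⟩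
    obtain ⟨w₁, rfl⟩ := hsurj o₁
    obtain ⟨w₂, rfl⟩ := hsurj o₂
    obtain ⟨p⟩ := hsrc.preconnected w₁ w₂
    exact reach_map (φA A) hφ p

lemma PG_T2 (hG : MinimallyTEdgeConnected 2 G) (X : CutCtx G e f A a₁ a₂ b₁ b₂)
    (hne : a₁ ≠ a₂) : IsTEdgeConnected 2 (PG G A a₁ a₂) := by
  intro s hs
  have key : ∀ c : Sym2 (Option ↥A), c ∈ (PG G A a₁ a₂).edgeSet →
      ((PG G A a₁ a₂).deleteEdges {c}).Connected := by
    intro c hc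
    induction c using Sym2.ind with
    | _ o₁ o₂ =>
    have hadj : (PG G A a₁ a₂).Adj o₁ o₂ := (SimpleGraph.mem_edgeSet _).mp hc
    match o₁, o₂ with
    | some u, some v =>
      apply PG_conn_key X (Dv := {s(u.1, v.1)}) (hsrc := M2conn_del_one hG _)
      · intro p q hp hq hpq hnot
        rw [Set.mem_singleton_iff]
        rw [Set.mem_singleton_iff] at hnot
        rw [lift_pair_eq_iff]
        exact hnot
      · intro he'
        rw [Set.mem_singleton_iff]
        exact fun h => lift_pair_ne_none h.symm
      · intro hf'
        rw [Set.mem_singleton_iff]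
        exact fun h => lift_pair_ne_none h.symm
    | none, some u =>
      rcases (hadj : u.1 = a₁ ∨ u.1 = a₂) with h | h
      · apply PG_conn_key X (Dv := {e}) (hsrc := M2conn_del_one hG _)
        · intro p q hp hq hpq hnot
          rw [Set.mem_singleton_iff]
          exact lift_pair_ne_none
        · intro he'
          exact absurd rfl he'
        · intro hf'
          rw [Set.mem_singleton_iff]
          intro hbad
          rw [Sym2.eq_iff] at hbad
          have hA2 : u.1 = a₂ := by
            rcases hbad with ⟨-, h2⟩ | ⟨h2, -⟩
            · exact (congrArg Subtype.val (Option.some.inj h2)).symm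
            · exact absurd h2 (by simp)
          exact hne (h.symm.trans hA2)
      · apply PG_conn_key X (Dv := {f}) (hsrc := M2conn_del_one hG _)
        · intro p q hp hq hpq hnot
          rw [Set.mem_singleton_iff]
          exact lift_pair_ne_none
        · intro he'
          rw [Set.mem_singleton_iff]
          intro hbad
          rw [Sym2.eq_iff] at hbad
          have hA1 : u.1 = a₁ := by
            rcases hbad with ⟨-, h2⟩ | ⟨h2, -⟩
            · exact (congrArg Subtype.val (Option.some.inj h2)).symm
            · exact absurd h2 (by simp)
          exact hne (hA1.symm.trans h)
        · intro hf'
          exact absurd rfl hf'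
    | some u, none =>
      have hc' : (s(none, some u) : Sym2 (Option ↥A)) = s(some u, none) := Sym2.eq_swap
      rw [← hc']
      have hadj' : (PG G A a₁ a₂).Adj none (some u) := hadj.symm
      rcases (hadj' : u.1 = a₁ ∨ u.1 = a₂) with h | h
      · apply PG_conn_key X (Dv := {e}) (hsrc := M2conn_del_one hG _)
        · intro p q hp hq hpq hnot
          rw [Set.mem_singleton_iff]
          exact lift_pair_ne_none
        · intro he'
          exact absurd rfl he'
        · intro hf'
          rw [Set.mem_singleton_iff]
          intro hbad
          rw [Sym2.eq_iff] at hbad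
          have hA2 : u.1 = a₂ := by
            rcases hbad with ⟨-, h2⟩ | ⟨h2, -⟩
            · exact (congrArg Subtype.val (Option.some.inj h2)).symm
            · exact absurd h2 (by simp)
          exact hne (h.symm.trans hA2)
      · apply PG_conn_key X (Dv := {f}) (hsrc := M2conn_del_one hG _)
        · intro p q hp hq hpq hnot
          rw [Set.mem_singleton_iff]
          exact lift_pair_ne_none
        · intro he'
          rw [Set.mem_singleton_iff]
          intro hbad
          rw [Sym2.eq_iff] at hbad
          have hA1 : u.1 = a₁ := by
            rcases hbad with ⟨-, h2⟩ | ⟨h2, -⟩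
            · exact (congrArg Subtype.val (Option.some.inj h2)).symm
            · exact absurd h2 (by simp)
          exact hne (hA1.symm.trans h)
        · intro hf'
          exact absurd rfl hf'
    | none, none => exact absurd hadj (by simp)
  have hPGconn : (PG G A a₁ a₂).Connected := by
    have hkey := PG_conn_key X (Dv := (∅ : Set (Sym2 V)))
      (D := (∅ : Set (Sym2 (Option ↥A))))
      (by rw [deleteEdges_empty]; exact M2conn hG)
      (by intro _ _ _ _ _ _; exact Set.notMem_empty _)
      (by intro _; exact Set.notMem_empty _)
      (by intro _; exact Set.notMem_empty _)
    rwa [deleteEdges_empty] at hkey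
  interval_cases h : s.card
  · rw [Finset.card_eq_zero] at h
    subst h
    rw [Finset.coe_empty, deleteEdges_empty]
    exact hPGconn
  · rw [Finset.card_eq_one] at h
    obtain ⟨c, rfl⟩ := h
    rw [Finset.coe_singleton]
    by_cases hc : c ∈ (PG G A a₁ a₂).edgeSet
    · exact key c hc
    · rw [del_nonedge hc]
      exact hPGconn

end PosTransfer

section IndTransfer

variable {V : Type*} {G : SimpleGraph V} {e f : Sym2 V} {A : Set V} {a b₁ b₂ : V}

lemma sub_pair_eq_iff {A : Set V} {u v p q : V} (hu : u ∈ A) (hv : v ∈ A)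
    (hp : p ∈ A) (hq : q ∈ A) :
    (s(⟨u,hu⟩, ⟨v,hv⟩) : Sym2 ↥A) = s(⟨p,hp⟩, ⟨q,hq⟩) ↔ s(u,v) = s(p,q) := by
  rw [Sym2.eq_iff, Sym2.eq_iff]
  simp [Subtype.ext_iff]

/-- Projection to the induced piece, collapsing the outside to `a`. -/
noncomputable def φB (A : Set V) (a : V) (ha : a ∈ A) : V → ↥A := fun v =>
  letI := Classical.dec (v ∈ A)
  if h : v ∈ A then ⟨v, h⟩ else ⟨a, ha⟩

lemma φB_mem {ha : a ∈ A} {v : V} (h : v ∈ A) : φB A a ha v = ⟨v, h⟩ := by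
  simp [φB, h]

lemma φB_not_mem {ha : a ∈ A} {v : V} (h : v ∉ A) : φB A a ha v = ⟨a, ha⟩ := by
  simp [φB, h]

lemma Ind_conn_key (X : CutCtx G e f A a a b₁ b₂)
    {Dv : Set (Sym2 V)} {D : Set (Sym2 ↥A)}
    (hsrc : (G.deleteEdges Dv).Connected)
    (cond1 : ∀ ⦃u v : V⦄ (hu : u ∈ A) (hv : v ∈ A), G.Adj u v → s(u,v) ∉ Dv →
        (s(⟨u,hu⟩, ⟨v,hv⟩) : Sym2 ↥A) ∉ D) :
    ((G.induce A).deleteEdges D).Connected := by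
  have ha : a ∈ A := X.ha₁
  have hφ : ∀ ⦃u v : V⦄, (G.deleteEdges Dv).Adj u v →
      φB A a ha u = φB A a ha v ∨
        ((G.induce A).deleteEdges D).Adj (φB A a ha u) (φB A a ha v) := by
    intro u v hadj
    rw [deleteEdges_adj] at hadj
    obtain ⟨hadj, hnot⟩ := hadj
    by_cases hu : u ∈ A <;> by_cases hv : v ∈ A
    · right
      rw [φB_mem hu, φB_mem hv, deleteEdges_adj]
      exact ⟨hadj, cond1 hu hv hadj hnot⟩
    · left
      rcases X.side.closed hadj hu hv with hEq | hEq
      · obtain ⟨rfl, rfl⟩ := X.cross_e hu hv hEq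
        rw [φB_mem hu, φB_not_mem hv]
      · obtain ⟨rfl, rfl⟩ := X.cross_f hu hv hEq
        rw [φB_mem hu, φB_not_mem hv]
    · left
      have hcl := X.side.closed hadj.symm hv hu
      rw [Sym2.eq_swap] at hcl
      rcases hcl with hEq | hEq
      · obtain ⟨rfl, rfl⟩ := X.cross_e hv hu (by rw [Sym2.eq_swap]; exact hEq)
        rw [φB_mem hv, φB_not_mem hu]
      · obtain ⟨rfl, rfl⟩ := X.cross_f hv hu (by rw [Sym2.eq_swap]; exact hEq)
        rw [φB_mem hv, φB_not_mem hu]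
    · left
      rw [φB_not_mem hu, φB_not_mem hv]
  have : Nonempty ↥A := ⟨⟨a, ha⟩⟩
  constructor
  · intro z w
    have hz : φB A a ha z.1 = z := by rw [φB_mem z.2]
    have hw : φB A a ha w.1 = w := by rw [φB_mem w.2]
    rw [← hz, ← hw]
    obtain ⟨p⟩ := hsrc.preconnected z.1 w.1
    exact reach_map (φB A a ha) hφ p

lemma Ind_T2 (hG : MinimallyTEdgeConnected 2 G) (X : CutCtx G e f A a a b₁ b₂) :
    IsTEdgeConnected 2 (G.induce A) := by
  intro s hs
  have hIconn : (G.induce A).Connected := by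
    have hkey := Ind_conn_key X (Dv := (∅ : Set (Sym2 V))) (D := (∅ : Set (Sym2 ↥A)))
      (by rw [deleteEdges_empty]; exact M2conn hG)
      (by intro _ _ _ _ _ _; exact Set.notMem_empty _)
    rwa [deleteEdges_empty] at hkey
  have key : ∀ c : Sym2 ↥A, c ∈ (G.induce A).edgeSet →
      ((G.induce A).deleteEdges {c}).Connected := by
    intro c hc
    induction c using Sym2.ind with
    | _ x y =>
    have hadj : (G.induce A).Adj x y := (SimpleGraph.mem_edgeSet _).mp hc
    apply Ind_conn_key X (Dv := {s(x.1, y.1)}) (hsrc := M2conn_del_one hG _)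
    intro p q hp hq hpq hnot
    rw [Set.mem_singleton_iff] at hnot ⊢
    intro hbad
    apply hnot
    have hxy : (s(⟨p,hp⟩, ⟨q,hq⟩) : Sym2 ↥A) = s(⟨x.1, x.2⟩, ⟨y.1, y.2⟩) := hbad
    rw [sub_pair_eq_iff hp hq x.2 y.2] at hxy
    exact hxy
  interval_cases h : s.card
  · rw [Finset.card_eq_zero] at h
    subst h
    rw [Finset.coe_empty, deleteEdges_empty]
    exact hIconn
  · rw [Finset.card_eq_one] at h
    obtain ⟨c, rfl⟩ := h
    rw [Finset.coe_singleton]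
    by_cases hc : c ∈ (G.induce A).edgeSet
    · exact key c hc
    · rw [del_nonedge hc]
      exact hIconn

end IndTransfer

section NegTransfer

variable {V : Type*} {G : SimpleGraph V} {e f : Sym2 V} {A : Set V} {a₁ a₂ b₁ b₂ : V}

lemma sym2_rep (c : Sym2 V) : ∃ p q : V, c = s(p,q) := by
  induction c using Sym2.ind with
  | _ p q => exact ⟨p, q, rfl⟩

lemma pair_ne_of' {S : Set V} {u v p q : V} (hu : u ∈ S) (hv : v ∈ S) (hp : p ∉ S) :
    s(u,v) ≠ s(p,q) := by
  intro h
  rw [Sym2.eq_iff] at h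
  rcases h with ⟨rfl, rfl⟩ | ⟨rfl, rfl⟩
  · exact hp hu
  · exact hp hv

lemma endpoints_in {A : Set V} {u v p q : V} (hu : u ∈ A) (hv : v ∈ A)
    (h : s(p,q) = s(u,v)) : p ∈ A ∧ q ∈ A := by
  rw [Sym2.eq_iff] at h
  rcases h with ⟨rfl, rfl⟩ | ⟨rfl, rfl⟩ <;> exact ⟨by assumption, by assumption⟩

/-- If the edges of the new cut avoid `Aᶜ`, then `Aᶜ` lies in `Zᶜ`. -/
lemma Ac_sub_Zc (X : CutCtx G e f A a₁ a₂ b₁ b₂) {g h' : Sym2 V} {Z : Set V}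
    (SZ : Side G g h' Z) (hb₁Z : b₁ ∉ Z)
    (hg : ∀ ⦃x y : V⦄, x ∉ A → y ∉ A → s(x,y) ≠ g)
    (hh : ∀ ⦃x y : V⦄, x ∉ A → y ∉ A → s(x,y) ≠ h') :
    ∀ w ∉ A, w ∉ Z := by
  intro w hw hwZ
  have hb₁c : b₁ ∈ Aᶜ := by simpa using X.hb₁
  have hreach : (G.deleteEdges {e,f}).Reachable b₁ w :=
    X.side.reachAc b₁ hb₁c w (by simpa using hw)
  obtain ⟨p⟩ := hreach
  have hreach2 : (G.deleteEdges {g,h'}).Reachable b₁ w := by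
    refine reach_transfer (Z := Aᶜ) ?_ ?_ p hb₁c
    · exact fun x y hxy hx => X.side.compl.closed' hxy hx
    · intro x y hxy hx
      have hy : y ∈ Aᶜ := X.side.compl.closed' hxy hx
      rw [deleteEdges_adj] at hxy ⊢
      refine ⟨hxy.1, ?_⟩
      simp only [Set.mem_insert_iff, Set.mem_singleton_iff]
      push_neg
      exact ⟨hg hx hy, hh hx hy⟩
  have hstay : w ∈ Zᶜ :=
    reach_stay (fun x y hxy hx => SZ.compl.closed' hxy hx) hreach2 (by simpa using hb₁Z)
  exact hstay hwZ

lemma notZ_of_adj {G : SimpleGraph V} {g h' : Sym2 V} {Z : Set V} (SZ : Side G g h' Z) {x y : V}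
    (hadj : G.Adj x y) (hne1 : s(x,y) ≠ g) (hne2 : s(x,y) ≠ h') (hyZ : y ∉ Z) : x ∉ Z := by
  intro hx
  rcases SZ.closed hadj hx hyZ with hc | hc
  · exact hne1 hc
  · exact hne2 hc

/-- Minimality transfer: internal edges of the piece graph lie in 2-cuts of the piece. -/
lemma PG_min_internal (hG : MinimallyTEdgeConnected 2 G)
    (X : CutCtx G e f A a₁ a₂ b₁ b₂) (hne : a₁ ≠ a₂) {u₀ v₀ : ↥A}
    (hadj : G.Adj u₀.1 v₀.1) :
    ¬ IsTEdgeConnected 2 ((PG G A a₁ a₂).deleteEdges {s(some u₀, some v₀)}) := by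
  have hNE : Nonempty V := ⟨a₁⟩
  obtain ⟨h', hh'E, hh'ne, hdis⟩ :=
    M2exists_partner hG ((SimpleGraph.mem_edgeSet _).mpr hadj)
  obtain ⟨W, hW⟩ := exists_side (M2conn_del_one hG s(u₀.1, v₀.1)) hdis
  obtain ⟨Z, SZ, hb₁Z⟩ : ∃ Z : Set V, Side G s(u₀.1, v₀.1) h' Z ∧ b₁ ∉ Z := by
    by_cases hbW : b₁ ∈ W
    · exact ⟨Wᶜ, hW.compl, by simp [hbW]⟩
    · exact ⟨W, hW, hbW⟩
  obtain ⟨p, q, hrep⟩ := sym2_rep h'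
  subst hrep
  have hadjpq : G.Adj p q := (SimpleGraph.mem_edgeSet _).mp hh'E
  have hg_ne_e : s(u₀.1, v₀.1) ≠ e := X.e_ne_inA u₀.2 v₀.2
  have hg_ne_f : s(u₀.1, v₀.1) ≠ f := X.f_ne_inA u₀.2 v₀.2
  have hgAc : ∀ ⦃x y : V⦄, x ∉ A → y ∉ A → s(x,y) ≠ s(u₀.1, v₀.1) :=
    fun x y hx _ => (pair_ne_of' u₀.2 v₀.2 hx).symm
  have hloc : (p ∈ A ∧ q ∈ A) ∨ (p ∉ A ∧ q ∉ A) ∨ s(p,q) = e ∨ s(p,q) = f := by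
    by_cases hp : p ∈ A <;> by_cases hq : q ∈ A
    · exact Or.inl ⟨hp, hq⟩
    · exact Or.inr (Or.inr (X.side.closed hadjpq hp hq))
    · rcases X.side.closed hadjpq.symm hq hp with hc | hc
      · rw [Sym2.eq_swap] at hc
        exact Or.inr (Or.inr (Or.inl hc))
      · rw [Sym2.eq_swap] at hc
        exact Or.inr (Or.inr (Or.inr hc))
    · exact Or.inr (Or.inl ⟨hp, hq⟩)
  intro hT
  rcases hloc with ⟨hp, hq⟩ | ⟨hp, hq⟩ | hEe | hEf
  -- Case (i): the partner edge is internal to A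
  · have hAcZc : ∀ w ∉ A, w ∉ Z :=
      Ac_sub_Zc X SZ hb₁Z hgAc (fun x y hx _ => (pair_ne_of' hp hq hx).symm)
    have ha₁Z : a₁ ∉ Z :=
      notZ_of_adj SZ X.eadj (pair_ne_of u₀.2 v₀.2 X.hb₁).symm
        (pair_ne_of hp hq X.hb₁).symm hb₁Z
    have ha₂Z : a₂ ∉ Z :=
      notZ_of_adj SZ X.fadj (pair_ne_of u₀.2 v₀.2 X.hb₂).symm
        (pair_ne_of hp hq X.hb₂).symm (hAcZc b₂ X.hb₂)
    have hZA : Z ⊆ A := fun z hz => by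
      by_contra hzA
      exact hAcZc z hzA hz
    have hnc := PG_not_conn X.ha₁ X.ha₂ hZA SZ.ne
      (D := {s(some u₀, some v₀), s(some ⟨p, hp⟩, some ⟨q, hq⟩)})
      (fun u v hu hv huv huZ hvZ => by
        rcases SZ.closed huv huZ hvZ with hc | hc
        · exact Or.inl ((lift_pair_eq_iff hu hv u₀.2 v₀.2).mpr hc)
        · exact Or.inr ((lift_pair_eq_iff hu hv hp hq).mpr hc))
      (fun hin => absurd hin ha₁Z)
      (fun hin => absurd hin ha₂Z)
    have hconn := hT {s(some ⟨p, hp⟩, some ⟨q, hq⟩)} (by simp)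
    rw [Finset.coe_singleton, deleteEdges_deleteEdges, Set.singleton_union] at hconn
    exact hnc hconn
  -- Case (ii): the partner edge is internal to the complement of A
  · have he_ne_h : s(a₁, b₁) ≠ s(p,q) := by
      intro hc
      rw [Sym2.eq_iff] at hc
      rcases hc with ⟨rfl, rfl⟩ | ⟨rfl, rfl⟩
      · exact hp X.ha₁
      · exact hq X.ha₁
    have hf_ne_h : s(a₂, b₂) ≠ s(p,q) := by
      intro hc
      rw [Sym2.eq_iff] at hc
      rcases hc with ⟨rfl, rfl⟩ | ⟨rfl, rfl⟩
      · exact hp X.ha₂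
      · exact hq X.ha₂
    have ha₁Z : a₁ ∉ Z :=
      notZ_of_adj SZ X.eadj (pair_ne_of u₀.2 v₀.2 X.hb₁).symm he_ne_h hb₁Z
    have hsame : a₂ ∈ Z ↔ b₂ ∈ Z := by
      constructor
      · intro ha
        by_contra hb
        rcases SZ.closed X.fadj ha hb with hc | hc
        · exact (pair_ne_of u₀.2 v₀.2 X.hb₂).symm hc
        · exact hf_ne_h hc
      · intro hb
        by_contra ha
        have hcl := SZ.closed X.fadj.symm hb ha
        rw [Sym2.eq_swap] at hcl
        rcases hcl with hc | hc
        · exact (pair_ne_of u₀.2 v₀.2 X.hb₂).symm hc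
        · exact hf_ne_h hc
    obtain ⟨zg, wg, hzgadj, hzgZ, hwgZ, hgrep⟩ := (SZ.symm_pair).cross_f (M2conn_del_one hG _)
    have hzgA : zg ∈ A ∧ wg ∈ A := endpoints_in u₀.2 v₀.2 hgrep.symm
    by_cases ha₂Z : a₂ ∈ Z
    · -- a₂ (and b₂) inside Z : disconnection certificate with the b*-edge at a₂
      have hZAne : (Z ∩ A).Nonempty := ⟨zg, hzgZ, hzgA.1⟩
      have hnc := PG_not_conn X.ha₁ X.ha₂ (Set.inter_subset_right) hZAne
        (D := {s(some u₀, some v₀), s(none, some ⟨a₂, X.ha₂⟩)})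
        (fun u v hu hv huv huZ hvZ => by
          have hvZ' : v ∉ Z := fun hv' => hvZ ⟨hv', hv⟩
          rcases SZ.closed huv huZ.1 hvZ' with hc | hc
          · exact Or.inl ((lift_pair_eq_iff hu hv u₀.2 v₀.2).mpr hc)
          · exact absurd hc (pair_ne_of hu hv hq))
        (fun hin => absurd hin.1 ha₁Z)
        (fun _ => by exact Set.mem_insert_of_mem _ rfl)
      have hconn := hT {s(none, some ⟨a₂, X.ha₂⟩)} (by simp)
      rw [Finset.coe_singleton, deleteEdges_deleteEdges, Set.singleton_union] at hconn
      exact hnc hconn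
    · -- a₂ (and b₂) outside Z : contradiction with 2-edge-connectivity of G
      have hsep : ¬ (G.deleteEdges {s(u₀.1, v₀.1)}).Connected := by
        apply not_connected_of_sep (Z := Z ∩ A) ⟨zg, hzgZ, hzgA.1⟩ ⟨a₁, fun hc => ha₁Z hc.1⟩
        intro x y hxy hx
        rw [deleteEdges_adj] at hxy
        by_contra hy
        by_cases hyA : y ∈ A
        · have hyZ : y ∉ Z := fun hy' => hy ⟨hy', hyA⟩
          rcases SZ.closed hxy.1 hx.1 hyZ with hc | hc
          · exact hxy.2 (by simpa using hc)
          · exact pair_ne_of hx.2 hyA hq hc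
        · rcases X.side.closed hxy.1 hx.2 hyA with hc | hc
          · obtain ⟨rfl, rfl⟩ := X.cross_e hx.2 hyA hc
            exact ha₁Z hx.1
          · obtain ⟨rfl, rfl⟩ := X.cross_f hx.2 hyA hc
            exact ha₂Z hx.1
      exact hsep (M2conn_del_one hG _)
  -- Case (iii): the partner edge is e
  · have hAcZc : ∀ w ∉ A, w ∉ Z := by
      refine Ac_sub_Zc X SZ hb₁Z hgAc ?_
      intro x y hx hy
      rw [hEe]
      exact X.e_ne_inAc hx hy
    have ha₂Z : a₂ ∉ Z :=
      notZ_of_adj SZ X.fadj (pair_ne_of u₀.2 v₀.2 X.hb₂).symm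
        (by rw [← X.hf, hEe]; exact fun hc => X.hef hc.symm)
        (hAcZc b₂ X.hb₂)
    have hZA : Z ⊆ A := fun z hz => by
      by_contra hzA
      exact hAcZc z hzA hz
    have hnc := PG_not_conn X.ha₁ X.ha₂ hZA SZ.ne
      (D := {s(some u₀, some v₀), s(none, some ⟨a₁, X.ha₁⟩)})
      (fun u v hu hv huv huZ hvZ => by
        rcases SZ.closed huv huZ hvZ with hc | hc
        · exact Or.inl ((lift_pair_eq_iff hu hv u₀.2 v₀.2).mpr hc)
        · exact absurd (hc.trans hEe) (X.e_ne_inA hu hv))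
      (fun _ => by exact Set.mem_insert_of_mem _ rfl)
      (fun hin => absurd hin ha₂Z)
    have hconn := hT {s(none, some ⟨a₁, X.ha₁⟩)} (by simp)
    rw [Finset.coe_singleton, deleteEdges_deleteEdges, Set.singleton_union] at hconn
    exact hnc hconn
  -- Case (iv): the partner edge is f
  · have hAcZc : ∀ w ∉ A, w ∉ Z := by
      refine Ac_sub_Zc X SZ hb₁Z hgAc ?_
      intro x y hx hy
      rw [hEf]
      exact X.f_ne_inAc hx hy
    have ha₁Z : a₁ ∉ Z :=
      notZ_of_adj SZ X.eadj (pair_ne_of u₀.2 v₀.2 X.hb₁).symm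
        (by rw [← X.he, hEf]; exact X.hef)
        hb₁Z
    have hZA : Z ⊆ A := fun z hz => by
      by_contra hzA
      exact hAcZc z hzA hz
    have hnc := PG_not_conn X.ha₁ X.ha₂ hZA SZ.ne
      (D := {s(some u₀, some v₀), s(none, some ⟨a₂, X.ha₂⟩)})
      (fun u v hu hv huv huZ hvZ => by
        rcases SZ.closed huv huZ hvZ with hc | hc
        · exact Or.inl ((lift_pair_eq_iff hu hv u₀.2 v₀.2).mpr hc)
        · exact absurd (hc.trans hEf) (X.f_ne_inA hu hv))
      (fun hin => absurd hin ha₁Z)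
      (fun _ => by exact Set.mem_insert_of_mem _ rfl)
    have hconn := hT {s(none, some ⟨a₂, X.ha₂⟩)} (by simp)
    rw [Finset.coe_singleton, deleteEdges_deleteEdges, Set.singleton_union] at hconn
    exact hnc hconn

end NegTransfer

section NegTransfer2

variable {V : Type*} {G : SimpleGraph V} {e f : Sym2 V} {A : Set V} {a a₁ a₂ b₁ b₂ : V}

lemma PG_min_bstar (ha₁ : a₁ ∈ A) (ha₂ : a₂ ∈ A) :
    ¬ ((PG G A a₁ a₂).deleteEdges
        {s(none, some ⟨a₁, ha₁⟩), s(none, some ⟨a₂, ha₂⟩)}).Connected := by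
  apply not_connected_of_sep (Z := {o : Option ↥A | o = none})
  · exact ⟨none, rfl⟩
  · exact ⟨some ⟨a₁, ha₁⟩, by simp⟩
  · rintro o₁ o₂ hadj rfl
    rw [deleteEdges_adj] at hadj
    exfalso
    match o₂, hadj with
    | some w, hadj =>
      rcases (hadj.1 : w.1 = a₁ ∨ w.1 = a₂) with h | h
      · have hw : w = ⟨a₁, ha₁⟩ := Subtype.ext h
        exact hadj.2 (by rw [hw]; exact Set.mem_insert _ _)
      · have hw : w = ⟨a₂, ha₂⟩ := Subtype.ext h
        exact hadj.2 (by rw [hw]; exact Set.mem_insert_of_mem _ rfl)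

lemma PG_min (hG : MinimallyTEdgeConnected 2 G)
    (X : CutCtx G e f A a₁ a₂ b₁ b₂) (hne : a₁ ≠ a₂) :
    ∀ c ∈ (PG G A a₁ a₂).edgeSet, ¬ IsTEdgeConnected 2 ((PG G A a₁ a₂).deleteEdges {c}) := by
  intro c hc
  induction c using Sym2.ind with
  | _ o₁ o₂ =>
  have hadj : (PG G A a₁ a₂).Adj o₁ o₂ := (SimpleGraph.mem_edgeSet _).mp hc
  have hbstar : ∀ u : ↥A, u.1 = a₁ ∨ u.1 = a₂ →
      ¬ IsTEdgeConnected 2 ((PG G A a₁ a₂).deleteEdges {s(none, some u)}) := by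
    intro u hu hT
    rcases hu with h | h
    · have hw : u = ⟨a₁, X.ha₁⟩ := Subtype.ext h
      have hconn := hT {s(none, some ⟨a₂, X.ha₂⟩)} (by simp)
      rw [Finset.coe_singleton, deleteEdges_deleteEdges, Set.singleton_union, hw] at hconn
      exact PG_min_bstar X.ha₁ X.ha₂ hconn
    · have hw : u = ⟨a₂, X.ha₂⟩ := Subtype.ext h
      have hconn := hT {s(none, some ⟨a₁, X.ha₁⟩)} (by simp)
      rw [Finset.coe_singleton, deleteEdges_deleteEdges, Set.singleton_union, hw,
        Set.pair_comm] at hconn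
      exact PG_min_bstar X.ha₁ X.ha₂ hconn
  match o₁, o₂, hadj with
  | some u, some v, hadj => exact PG_min_internal hG X hne hadj
  | none, some u, hadj => exact hbstar u hadj
  | some u, none, hadj =>
    have hsw : (s(some u, none) : Sym2 (Option ↥A)) = s(none, some u) := Sym2.eq_swap
    rw [hsw]
    exact hbstar u hadj

/-- Minimality transfer for the induced piece (case of coincident attachments). -/
lemma Ind_min_internal (hG : MinimallyTEdgeConnected 2 G)
    (X : CutCtx G e f A a a b₁ b₂) {u₀ v₀ : ↥A}
    (hadj : G.Adj u₀.1 v₀.1) :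
    ¬ IsTEdgeConnected 2 ((G.induce A).deleteEdges {s(u₀, v₀)}) := by
  have hNE : Nonempty V := ⟨a⟩
  obtain ⟨h', hh'E, hh'ne, hdis⟩ :=
    M2exists_partner hG ((SimpleGraph.mem_edgeSet _).mpr hadj)
  obtain ⟨W, hW⟩ := exists_side (M2conn_del_one hG s(u₀.1, v₀.1)) hdis
  obtain ⟨Z, SZ, hb₁Z⟩ : ∃ Z : Set V, Side G s(u₀.1, v₀.1) h' Z ∧ b₁ ∉ Z := by
    by_cases hbW : b₁ ∈ W
    · exact ⟨Wᶜ, hW.compl, by simp [hbW]⟩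
    · exact ⟨W, hW, hbW⟩
  obtain ⟨p, q, hrep⟩ := sym2_rep h'
  subst hrep
  have hadjpq : G.Adj p q := (SimpleGraph.mem_edgeSet _).mp hh'E
  have hg_ne_e : s(u₀.1, v₀.1) ≠ e := X.e_ne_inA u₀.2 v₀.2
  have hg_ne_f : s(u₀.1, v₀.1) ≠ f := X.f_ne_inA u₀.2 v₀.2
  have hgAc : ∀ ⦃x y : V⦄, x ∉ A → y ∉ A → s(x,y) ≠ s(u₀.1, v₀.1) :=
    fun x y hx _ => (pair_ne_of' u₀.2 v₀.2 hx).symm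
  have hloc : (p ∈ A ∧ q ∈ A) ∨ (p ∉ A ∧ q ∉ A) ∨ s(p,q) = e ∨ s(p,q) = f := by
    by_cases hp : p ∈ A <;> by_cases hq : q ∈ A
    · exact Or.inl ⟨hp, hq⟩
    · exact Or.inr (Or.inr (X.side.closed hadjpq hp hq))
    · rcases X.side.closed hadjpq.symm hq hp with hc | hc
      · rw [Sym2.eq_swap] at hc
        exact Or.inr (Or.inr (Or.inl hc))
      · rw [Sym2.eq_swap] at hc
        exact Or.inr (Or.inr (Or.inr hc))
    · exact Or.inr (Or.inl ⟨hp, hq⟩)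
  intro hT
  rcases hloc with ⟨hp, hq⟩ | ⟨hp, hq⟩ | hEe | hEf
  -- Case (i): partner edge internal to A
  · have hAcZc : ∀ w ∉ A, w ∉ Z :=
      Ac_sub_Zc X SZ hb₁Z hgAc (fun x y hx _ => (pair_ne_of' hp hq hx).symm)
    have haZ : a ∉ Z :=
      notZ_of_adj SZ X.eadj (pair_ne_of u₀.2 v₀.2 X.hb₁).symm
        (pair_ne_of hp hq X.hb₁).symm hb₁Z
    have hZA : Z ⊆ A := fun z hz => by
      by_contra hzA
      exact hAcZc z hzA hz
    have hnc := Ind_not_conn hZA SZ.ne X.ha₁ haZ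
      (D := {s(u₀, v₀), s(⟨p, hp⟩, ⟨q, hq⟩)})
      (fun u v hu hv huv huZ hvZ => by
        rcases SZ.closed huv huZ hvZ with hc | hc
        · exact Or.inl ((sub_pair_eq_iff hu hv u₀.2 v₀.2).mpr hc)
        · exact Or.inr ((sub_pair_eq_iff hu hv hp hq).mpr hc))
    have hconn := hT {s((⟨p, hp⟩ : ↥A), (⟨q, hq⟩ : ↥A))} (by simp)
    rw [Finset.coe_singleton, deleteEdges_deleteEdges, Set.singleton_union] at hconn
    exact hnc hconn
  -- Case (ii): partner edge internal to the complement; impossible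
  · have he_ne_h : s(a, b₁) ≠ s(p,q) := by
      intro hc
      rw [Sym2.eq_iff] at hc
      rcases hc with ⟨rfl, rfl⟩ | ⟨rfl, rfl⟩
      · exact hp X.ha₁
      · exact hq X.ha₁
    have hf_ne_h : s(a, b₂) ≠ s(p,q) := by
      intro hc
      rw [Sym2.eq_iff] at hc
      rcases hc with ⟨rfl, rfl⟩ | ⟨rfl, rfl⟩
      · exact hp X.ha₂
      · exact hq X.ha₂
    have haZ : a ∉ Z :=
      notZ_of_adj SZ X.eadj (pair_ne_of u₀.2 v₀.2 X.hb₁).symm he_ne_h hb₁Z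
    obtain ⟨zg, wg, hzgadj, hzgZ, hwgZ, hgrep⟩ := (SZ.symm_pair).cross_f (M2conn_del_one hG _)
    have hzgA : zg ∈ A ∧ wg ∈ A := endpoints_in u₀.2 v₀.2 hgrep.symm
    have hsep : ¬ (G.deleteEdges {s(u₀.1, v₀.1)}).Connected := by
      apply not_connected_of_sep (Z := Z ∩ A) ⟨zg, hzgZ, hzgA.1⟩ ⟨a, fun hc => haZ hc.1⟩
      intro x y hxy hx
      rw [deleteEdges_adj] at hxy
      by_contra hy
      by_cases hyA : y ∈ A
      · have hyZ : y ∉ Z := fun hy' => hy ⟨hy', hyA⟩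
        rcases SZ.closed hxy.1 hx.1 hyZ with hc | hc
        · exact hxy.2 (by simpa using hc)
        · exact pair_ne_of hx.2 hyA hq hc
      · rcases X.side.closed hxy.1 hx.2 hyA with hc | hc
        · obtain ⟨rfl, rfl⟩ := X.cross_e hx.2 hyA hc
          exact haZ hx.1
        · obtain ⟨rfl, rfl⟩ := X.cross_f hx.2 hyA hc
          exact haZ hx.1
    exact hsep (M2conn_del_one hG _)
  -- Case (iii): partner edge is e
  · have hAcZc : ∀ w ∉ A, w ∉ Z := by
      refine Ac_sub_Zc X SZ hb₁Z hgAc ?_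
      intro x y hx hy
      rw [hEe]
      exact X.e_ne_inAc hx hy
    have haZ : a ∉ Z :=
      notZ_of_adj SZ X.fadj (pair_ne_of u₀.2 v₀.2 X.hb₂).symm
        (by rw [← X.hf, hEe]; exact fun hc => X.hef hc.symm)
        (hAcZc b₂ X.hb₂)
    have hZA : Z ⊆ A := fun z hz => by
      by_contra hzA
      exact hAcZc z hzA hz
    have hnc := Ind_not_conn hZA SZ.ne X.ha₁ haZ
      (D := {s(u₀, v₀)})
      (fun u v hu hv huv huZ hvZ => by
        rcases SZ.closed huv huZ hvZ with hc | hc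
        · exact (sub_pair_eq_iff hu hv u₀.2 v₀.2).mpr hc
        · exact absurd (hc.trans hEe) (X.e_ne_inA hu hv))
    have hconn := hT ∅ (by simp)
    rw [Finset.coe_empty, deleteEdges_empty] at hconn
    exact hnc hconn
  -- Case (iv): partner edge is f
  · have hAcZc : ∀ w ∉ A, w ∉ Z := by
      refine Ac_sub_Zc X SZ hb₁Z hgAc ?_
      intro x y hx hy
      rw [hEf]
      exact X.f_ne_inAc hx hy
    have haZ : a ∉ Z :=
      notZ_of_adj SZ X.eadj (pair_ne_of u₀.2 v₀.2 X.hb₁).symm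
        (by rw [← X.he, hEf]; exact X.hef)
        hb₁Z
    have hZA : Z ⊆ A := fun z hz => by
      by_contra hzA
      exact hAcZc z hzA hz
    have hnc := Ind_not_conn hZA SZ.ne X.ha₁ haZ
      (D := {s(u₀, v₀)})
      (fun u v hu hv huv huZ hvZ => by
        rcases SZ.closed huv huZ hvZ with hc | hc
        · exact (sub_pair_eq_iff hu hv u₀.2 v₀.2).mpr hc
        · exact absurd (hc.trans hEf) (X.f_ne_inA hu hv))
    have hconn := hT ∅ (by simp)
    rw [Finset.coe_empty, deleteEdges_empty] at hconn
    exact hnc hconn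

lemma Ind_min (hG : MinimallyTEdgeConnected 2 G) (X : CutCtx G e f A a a b₁ b₂) :
    ∀ c ∈ (G.induce A).edgeSet, ¬ IsTEdgeConnected 2 ((G.induce A).deleteEdges {c}) := by
  intro c hc
  induction c using Sym2.ind with
  | _ x y =>
  have hadj : (G.induce A).Adj x y := (SimpleGraph.mem_edgeSet _).mp hc
  exact Ind_min_internal hG X hadj

end NegTransfer2

section Assemble

variable {V : Type*}

lemma edge_ncard_le_choose [Fintype V] (G : SimpleGraph V) :
    G.edgeSet.ncard ≤ (Fintype.card V).choose 2 := by
  classical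
  have hft : Fintype G.edgeSet := Fintype.ofFinite _
  rw [← SimpleGraph.coe_edgeFinset, Set.ncard_coe_finset]
  exact SimpleGraph.card_edgeFinset_le_card_choose_two

lemma PG_min2EC {G : SimpleGraph V} {e f : Sym2 V} {A : Set V} {a₁ a₂ b₁ b₂ : V}
    (hG : MinimallyTEdgeConnected 2 G) (X : CutCtx G e f A a₁ a₂ b₁ b₂) (hne : a₁ ≠ a₂) :
    MinimallyTEdgeConnected 2 (PG G A a₁ a₂) :=
  ⟨PG_T2 hG X hne, PG_min hG X hne⟩

lemma Ind_min2EC {G : SimpleGraph V} {e f : Sym2 V} {A : Set V} {a b₁ b₂ : V}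
    (hG : MinimallyTEdgeConnected 2 G) (X : CutCtx G e f A a a b₁ b₂) :
    MinimallyTEdgeConnected 2 (G.induce A) :=
  ⟨Ind_T2 hG X, Ind_min hG X⟩

lemma deg2_of_singleton [Fintype V] {G : SimpleGraph V} [DecidableRel G.Adj]
    (hdeg : ∀ v : V, 2 ≤ G.degree v) {g h' : Sym2 V}
    (hg : g ∈ G.edgeSet) (hgh : g ≠ h') {A : Set V} (hS : Side G g h' A)
    (h1 : A.ncard = 1) : ∃ v, v ∈ g ∧ G.degree v = 2 := by
  classical
  obtain ⟨v, hv⟩ := Set.ncard_eq_one.mp h1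
  have hcl : ∀ u : V, G.Adj v u → s(v,u) = g ∨ s(v,u) = h' := by
    intro u hadj
    have hvA : v ∈ A := by rw [hv]; rfl
    have huA : u ∉ A := by
      rw [hv]
      intro hc
      rw [Set.mem_singleton_iff] at hc
      subst hc
      exact G.irrefl hadj
    exact hS.closed hadj hvA huA
  have hinj : Set.InjOn (fun u => s(v,u)) ↑(G.neighborFinset v) := by
    intro x hx y hy hxy
    simp only at hxy
    rw [Sym2.eq_iff] at hxy
    rcases hxy with ⟨-, h⟩ | ⟨h1', h2'⟩
    · exact h
    · rw [Finset.mem_coe, SimpleGraph.mem_neighborFinset] at hx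
      exact absurd h2' hx.ne'
  have himsub : (G.neighborFinset v).image (fun u => s(v,u)) ⊆ {g, h'} := by
    intro c hc
    rw [Finset.mem_image] at hc
    obtain ⟨u, hu, rfl⟩ := hc
    rw [SimpleGraph.mem_neighborFinset] at hu
    rcases hcl u hu with h | h <;> rw [h] <;> simp
  have hcard_im : ((G.neighborFinset v).image (fun u => s(v,u))).card = G.degree v := by
    rw [Finset.card_image_of_injOn hinj]
    rfl
  have hdle : G.degree v ≤ 2 := by
    have := Finset.card_le_card himsub
    rw [hcard_im] at this
    exact this.trans (Finset.card_insert_le _ _ |>.trans (by simp))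
  have hdeg2 : G.degree v = 2 := le_antisymm hdle (hdeg v)
  have heq : (G.neighborFinset v).image (fun u => s(v,u)) = {g, h'} := by
    apply Finset.eq_of_subset_of_card_le himsub
    rw [hcard_im, hdeg2]
    exact Finset.card_le_two
  have hgmem : g ∈ (G.neighborFinset v).image (fun u => s(v,u)) := by
    rw [heq]; simp
  rw [Finset.mem_image] at hgmem
  obtain ⟨u, hu, hrep⟩ := hgmem
  exact ⟨v, by rw [← hrep]; simp, hdeg2⟩

end Assemble

section SideBound

lemma side_bound {V : Type} [Fintype V] {G : SimpleGraph V} {e f : Sym2 V} {A : Set V}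
    {a₁ a₂ b₁ b₂ : V} (hG : MinimallyTEdgeConnected 2 G)
    (X : CutCtx G e f A a₁ a₂ b₁ b₂)
    (IH : ∀ (W : Type) [Fintype W] (H : SimpleGraph W), Fintype.card W < Fintype.card V →
        MinimallyTEdgeConnected 2 H → 4 ≤ Fintype.card W →
        H.edgeSet.ncard ≤ 2 * Fintype.card W - 4)
    (hA2 : 2 ≤ A.ncard) (hAc2 : 2 ≤ Aᶜ.ncard) :
    (inE G A).ncard ≤ 2 * A.ncard - 4 ∨ (A.ncard = 2 ∧ (inE G A).ncard ≤ 1) ∨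
      (A.ncard = 3 ∧ a₁ = a₂ ∧ (inE G A).ncard ≤ 3) := by
  classical
  have hn : A.ncard + Aᶜ.ncard = Fintype.card V := by
    rw [← Nat.card_eq_fintype_card]
    exact Set.ncard_add_ncard_compl A
  have hVcard2 : 2 ≤ Fintype.card V := by omega
  letI : Fintype ↥A := Fintype.ofFinite _
  have hcardInd : Fintype.card ↥A = A.ncard := by
    rw [← Nat.card_eq_fintype_card, Nat.card_coe_set_eq]
  by_cases hne : a₁ = a₂
  · -- coincident attachments: use the induced piece
    subst hne
    have hXmin := Ind_min2EC hG X
    have hmInd : (G.induce A).edgeSet.ncard = (inE G A).ncard := induce_edge_ncard G A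
    have hA3 : 3 ≤ A.ncard := by
      by_contra hA3
      have hA2' : A.ncard = 2 := by omega
      obtain ⟨x, y, hxy, hAxy⟩ := Set.ncard_eq_two.mp hA2'
      have ha₁A := X.ha₁
      rw [hAxy] at ha₁A
      -- u : the element of A different from a₁
      obtain ⟨u, huA, hune⟩ : ∃ u, u ∈ A ∧ u ≠ a₁ := by
        rcases ha₁A with rfl | rfl
        · exact ⟨y, by rw [hAxy]; simp, fun hc => hxy hc.symm⟩
        · exact ⟨x, by rw [hAxy]; simp, hxy⟩
      have hnb : G.neighborFinset u ⊆ {a₁} := by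
        intro w hw
        rw [SimpleGraph.mem_neighborFinset] at hw
        rw [Finset.mem_singleton]
        by_cases hwA : w ∈ A
        · -- w ∈ A, w ≠ u so w is the other element
          rw [hAxy] at huA hwA
          rcases ha₁A with rfl | rfl
          · rcases hwA with rfl | rfl
            · rcases huA with rfl | rfl
              · exact absurd rfl hw.ne'
              · rfl
            · rcases huA with rfl | rfl
              · exact absurd rfl hune
              · exact absurd rfl hw.ne'
          · rcases hwA with rfl | rfl
            · rcases huA with rfl | rfl
              · exact absurd rfl hw.ne'
              · exact absurd rfl hune
            · rcases huA with rfl | rfl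
              · rfl
              · exact absurd rfl hw.ne'
        · rcases X.side.closed hw huA hwA with hc | hc
          · exact absurd (X.cross_e huA hwA hc).1 hune
          · exact absurd (X.cross_f huA hwA hc).1 hune
      have hdle : G.degree u ≤ 1 := by
        have h := Finset.card_le_card hnb
        rw [Finset.card_singleton] at h
        exact h
      have := M2degree_two_le hG hVcard2 u
      omega
    by_cases hα : 4 ≤ A.ncard
    · left
      have hlt : Fintype.card ↥A < Fintype.card V := by omega
      have := IH ↥A (G.induce A) hlt hXmin (by omega)
      rw [hmInd, hcardInd] at this
      exact this
    · right; right
      refine ⟨by omega, rfl, ?_⟩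
      have := edge_ncard_le_choose (G.induce A)
      rw [hmInd, hcardInd] at this
      have h3 : A.ncard = 3 := by omega
      rw [h3] at this
      exact this.trans (by decide)
  · -- distinct attachments: use the quotient piece
    have hXmin := PG_min2EC hG X hne
    have hmPG : (PG G A a₁ a₂).edgeSet.ncard = (inE G A).ncard + 2 :=
      PG_edge_ncard X.ha₁ X.ha₂ X.hb₁ hne
    letI : Fintype (Option ↥A) := instFintypeOption
    have hcardO : Fintype.card (Option ↥A) = A.ncard + 1 := by
      rw [← Nat.card_eq_fintype_card]
      exact PG_card A
    by_cases hα : 3 ≤ A.ncard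
    · left
      have hlt : Fintype.card (Option ↥A) < Fintype.card V := by omega
      have := IH (Option ↥A) (PG G A a₁ a₂) hlt hXmin (by omega)
      rw [hmPG, hcardO] at this
      omega
    · right; left
      refine ⟨by omega, ?_⟩
      have := edge_ncard_le_choose (PG G A a₁ a₂)
      rw [hmPG, hcardO] at this
      have h2 : A.ncard = 2 := by omega
      rw [h2] at this
      have hch : ((2:ℕ)+1).choose 2 = 3 := by decide
      rw [hch] at this
      omega

end SideBound

section BaseCount

lemma base_count {V : Type} [Fintype V] (G : SimpleGraph V) [DecidableRel G.Adj]
    (hdeg : ∀ v : V, 2 ≤ G.degree v)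
    (hB : ∀ g ∈ G.edgeSet, ∃ v, v ∈ g ∧ G.degree v = 2)
    (h4 : 4 ≤ Fintype.card V) :
    G.edgeSet.ncard ≤ 2 * Fintype.card V - 4 ∧
      (6 ≤ Fintype.card V → G.edgeSet.ncard = 2 * Fintype.card V - 4 →
        ∃ x y : V, x ≠ y ∧ ¬ G.Adj x y ∧
          ∀ w, w ≠ x → w ≠ y → G.Adj w x ∧ G.Adj w y ∧
            ∀ u, G.Adj w u → u = x ∨ u = y) := by
  classical
  have hNE : Nonempty V := Fintype.card_pos_iff.mp (by omega)
  have hEc : G.edgeSet.ncard = G.edgeFinset.card := by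
    rw [← SimpleGraph.coe_edgeFinset, Set.ncard_coe_finset]
  set n := Fintype.card V with hn
  set m := G.edgeFinset.card with hm
  set D2 := Finset.univ.filter (fun v => G.degree v = 2) with hD2
  set Hi := Finset.univ.filter (fun v => ¬ G.degree v = 2) with hHi
  have hsplit : D2.card + Hi.card = n := by
    rw [hD2, hHi, Finset.card_filter_add_card_filter_not]
    exact Finset.card_univ
  choose! ω hω1 hω2 using hB
  have hsum := Finset.card_eq_sum_card_image ω G.edgeFinset
  have hfible : ∀ w, w ∈ G.edgeFinset.image ω →
      (G.edgeFinset.filter fun g => ω g = w).card ≤ 2 := by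
    intro w hw
    obtain ⟨g₀, hg₀E, hg₀⟩ := Finset.mem_image.mp hw
    rw [SimpleGraph.mem_edgeFinset] at hg₀E
    have hdw : G.degree w = 2 := hg₀ ▸ hω2 g₀ hg₀E
    have hsub : (G.edgeFinset.filter fun g => ω g = w) ⊆ G.incidenceFinset w := by
      intro g hg
      obtain ⟨hgE, hgw⟩ := Finset.mem_filter.mp hg
      rw [SimpleGraph.mem_edgeFinset] at hgE
      rw [SimpleGraph.mem_incidenceFinset]
      exact ⟨hgE, hgw ▸ hω1 g hgE⟩
    have := Finset.card_le_card hsub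
    rwa [SimpleGraph.card_incidenceFinset_eq_degree, hdw] at this
  have himgD2 : G.edgeFinset.image ω ⊆ D2 := by
    intro w hw
    obtain ⟨g₀, hg₀E, hg₀⟩ := Finset.mem_image.mp hw
    rw [SimpleGraph.mem_edgeFinset] at hg₀E
    rw [hD2, Finset.mem_filter]
    exact ⟨Finset.mem_univ _, hg₀ ▸ hω2 g₀ hg₀E⟩
  have hm2img : m ≤ 2 * (G.edgeFinset.image ω).card := by
    rw [hm, hsum]
    calc ∑ w ∈ G.edgeFinset.image ω, (G.edgeFinset.filter fun g => ω g = w).card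
        ≤ ∑ _w ∈ G.edgeFinset.image ω, 2 := Finset.sum_le_sum hfible
      _ = 2 * (G.edgeFinset.image ω).card := by
          rw [Finset.sum_const, smul_eq_mul, mul_comm]
  have hm2d2 : m ≤ 2 * D2.card :=
    hm2img.trans (by
      have := Finset.card_le_card himgD2
      omega)
  have hhs : ∑ v, G.degree v = 2 * m := SimpleGraph.sum_degrees_eq_twice_card_edges G
  have hsum_split : (∑ v ∈ D2, G.degree v) + ∑ v ∈ Hi, G.degree v = ∑ v, G.degree v := by
    rw [hD2, hHi]
    exact Finset.sum_filter_add_sum_filter_not _ _ _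
  have hD2sum : ∑ v ∈ D2, G.degree v = 2 * D2.card := by
    rw [Finset.sum_congr rfl (fun v hv => (Finset.mem_filter.mp hv).2), Finset.sum_const,
      smul_eq_mul, mul_comm]
  -- the bound
  have hHi01 : Hi.card = 0 → m = n := by
    intro hh
    have hHie : Hi = ∅ := Finset.card_eq_zero.mp hh
    rw [hHie, Finset.sum_empty] at hsum_split
    omega
  have hbound : m ≤ 2 * n - 4 := by
    by_cases h2 : 2 ≤ Hi.card
    · omega
    · have hcases : Hi.card = 0 ∨ Hi.card = 1 := by omega
      rcases hcases with hh | hh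
      · have := hHi01 hh
        omega
      · obtain ⟨x, hx⟩ := Finset.card_eq_one.mp hh
        have hxHi : x ∈ Hi := by rw [hx]; simp
        have hdx3 : 3 ≤ G.degree x := by
          have h2' := (Finset.mem_filter.mp hxHi).2
          have := hdeg x
          omega
        have hdxlt : G.degree x < n := G.degree_lt_card_verts x
        rw [hx, Finset.sum_singleton] at hsum_split
        omega
  refine ⟨by omega, ?_⟩
  -- the equality analysis
  intro h6 hmeq
  rw [hEc] at hmeq
  have hHi2 : Hi.card = 2 := by
    have h0 : Hi.card ≠ 0 := by
      intro hh
      have hHie : Hi = ∅ := Finset.card_eq_zero.mp hh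
      rw [hHie, Finset.sum_empty] at hsum_split
      omega
    have h1 : Hi.card ≠ 1 := by
      intro hh
      obtain ⟨x, hx⟩ := Finset.card_eq_one.mp hh
      have hxHi : x ∈ Hi := by rw [hx]; simp
      have hdx3 : 3 ≤ G.degree x := by
        have h2' := (Finset.mem_filter.mp hxHi).2
        have := hdeg x
        omega
      have hdxlt : G.degree x < n := G.degree_lt_card_verts x
      rw [hx, Finset.sum_singleton] at hsum_split
      omega
    omega
  obtain ⟨x, y, hxyne, hHixy⟩ := Finset.card_eq_two.mp hHi2
  have hxHi : x ∈ Hi := by rw [hHixy]; simp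
  have hyHi : y ∈ Hi := by rw [hHixy]; simp
  have hdegw : ∀ w : V, w ≠ x → w ≠ y → G.degree w = 2 := by
    intro w hwx hwy
    by_contra hne2
    have : w ∈ Hi := by
      rw [hHi, Finset.mem_filter]
      exact ⟨Finset.mem_univ _, hne2⟩
    rw [hHixy, Finset.mem_insert, Finset.mem_singleton] at this
    tauto
  have hnadj : ¬ G.Adj x y := by
    intro hadj
    have hgE : s(x,y) ∈ G.edgeSet := (SimpleGraph.mem_edgeSet _).mpr hadj
    have hv := hω1 _ hgE
    have hdv := hω2 _ hgE
    rw [Sym2.mem_iff] at hv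
    rcases hv with h | h
    · exact (Finset.mem_filter.mp hxHi).2 (h ▸ hdv)
    · exact (Finset.mem_filter.mp hyHi).2 (h ▸ hdv)
  -- equality forces the fiber structure
  have hd2n : D2.card = n - 2 := by omega
  have himgcard : (G.edgeFinset.image ω).card = D2.card := by
    have h1 := Finset.card_le_card himgD2
    omega
  have himg_eq : G.edgeFinset.image ω = D2 :=
    Finset.eq_of_subset_of_card_le himgD2 (by omega)
  have hfib2 : ∀ w ∈ G.edgeFinset.image ω,
      (G.edgeFinset.filter fun g => ω g = w).card = 2 := by
    by_contra hc
    push_neg at hc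
    obtain ⟨w₀, hw₀, hw₀ne⟩ := hc
    have hlt : (G.edgeFinset.filter fun g => ω g = w₀).card < 2 := by
      have := hfible w₀ hw₀
      omega
    have : m < 2 * (G.edgeFinset.image ω).card := by
      rw [hm, hsum]
      calc ∑ w ∈ G.edgeFinset.image ω, (G.edgeFinset.filter fun g => ω g = w).card
          < ∑ _w ∈ G.edgeFinset.image ω, 2 := by
            apply Finset.sum_lt_sum hfible ⟨w₀, hw₀, hlt⟩
        _ = 2 * (G.edgeFinset.image ω).card := by
            rw [Finset.sum_const, smul_eq_mul, mul_comm]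
    omega
  have hωval : ∀ w ∈ D2, ∀ g ∈ G.incidenceFinset w, ω g = w := by
    intro w hw g hg
    have hdw : G.degree w = 2 := (Finset.mem_filter.mp hw).2
    have hw' : w ∈ G.edgeFinset.image ω := himg_eq ▸ hw
    have hsub : (G.edgeFinset.filter fun g => ω g = w) ⊆ G.incidenceFinset w := by
      intro g' hg'
      obtain ⟨hgE, hgw⟩ := Finset.mem_filter.mp hg'
      rw [SimpleGraph.mem_edgeFinset] at hgE
      rw [SimpleGraph.mem_incidenceFinset]
      exact ⟨hgE, hgw ▸ hω1 g' hgE⟩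
    have heqf : (G.edgeFinset.filter fun g => ω g = w) = G.incidenceFinset w := by
      apply Finset.eq_of_subset_of_card_le hsub
      rw [SimpleGraph.card_incidenceFinset_eq_degree, hdw, hfib2 w hw']
    rw [← heqf] at hg
    exact (Finset.mem_filter.mp hg).2
  have hD2mem : ∀ w : V, w ≠ x → w ≠ y → w ∈ D2 := by
    intro w hwx hwy
    rw [hD2, Finset.mem_filter]
    exact ⟨Finset.mem_univ _, hdegw w hwx hwy⟩
  have hnbrs : ∀ w, w ≠ x → w ≠ y → ∀ u, G.Adj w u → u = x ∨ u = y := by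
    intro w hwx hwy u hadj
    by_contra hc
    push_neg at hc
    have hwD2 := hD2mem w hwx hwy
    have huD2 := hD2mem u hc.1 hc.2
    have hgE : s(w,u) ∈ G.edgeSet := (SimpleGraph.mem_edgeSet _).mpr hadj
    have hinc_w : s(w,u) ∈ G.incidenceFinset w := by
      rw [SimpleGraph.mem_incidenceFinset]
      exact ⟨hgE, by simp⟩
    have hinc_u : s(w,u) ∈ G.incidenceFinset u := by
      rw [SimpleGraph.mem_incidenceFinset]
      exact ⟨hgE, by simp⟩
    have h1 := hωval w hwD2 _ hinc_w
    have h2 := hωval u huD2 _ hinc_u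
    exact hadj.ne (h1.symm.trans h2)
  refine ⟨x, y, hxyne, hnadj, ?_⟩
  intro w hwx hwy
  have hsubnb : G.neighborFinset w ⊆ {x, y} := by
    intro u hu
    rw [SimpleGraph.mem_neighborFinset] at hu
    rcases hnbrs w hwx hwy u hu with rfl | rfl <;> simp
  have heqnb : G.neighborFinset w = {x, y} := by
    apply Finset.eq_of_subset_of_card_le hsubnb
    have hcard2 : ({x, y} : Finset V).card = 2 := Finset.card_pair hxyne
    have : (G.neighborFinset w).card = 2 := hdegw w hwx hwy
    omega
  have hx' : x ∈ G.neighborFinset w := by rw [heqnb]; simp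
  have hy' : y ∈ G.neighborFinset w := by rw [heqnb]; simp
  rw [SimpleGraph.mem_neighborFinset] at hx' hy'
  exact ⟨hx', hy', hnbrs w hwx hwy⟩

end BaseCount

section Aux

/-- The divide property: there is a 2-cut both of whose sides have ≥ 2 vertices. -/
def DivProp {V : Type} (G : SimpleGraph V) : Prop :=
  ∃ (e f : Sym2 V) (A : Set V), e ∈ G.edgeSet ∧ f ∈ G.edgeSet ∧ e ≠ f ∧
    Side G e f A ∧ 2 ≤ A.ncard ∧ 2 ≤ Aᶜ.ncard

lemma divide_data {V : Type} [Fintype V] {G : SimpleGraph V}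
    (hG : MinimallyTEdgeConnected 2 G)
    {e f : Sym2 V} {A : Set V} (he : e ∈ G.edgeSet) (hf : f ∈ G.edgeSet) (hef : e ≠ f)
    (hS : Side G e f A) :
    ∃ a₁ a₂ b₁ b₂ : V, ∃ (_ : CutCtx G e f A a₁ a₂ b₁ b₂)
      (_ : CutCtx G e f Aᶜ b₁ b₂ a₁ a₂),
      G.edgeSet.ncard = (inE G A).ncard + (inE G Aᶜ).ncard + 2 := by
  obtain ⟨a₂, b₂, hfadj, ha₂, hb₂, hfrep⟩ := hS.cross_f (M2conn_del_one hG e)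
  obtain ⟨a₁, b₁, headj, ha₁, hb₁, herep⟩ := (hS.symm_pair).cross_f (M2conn_del_one hG f)
  refine ⟨a₁, a₂, b₁, b₂,
    ⟨hS, hef, headj, hfadj, herep, hfrep, ha₁, ha₂, hb₁, hb₂⟩,
    ⟨hS.compl, hef, headj.symm, hfadj.symm, herep.trans Sym2.eq_swap,
      hfrep.trans Sym2.eq_swap, (by simpa using hb₁), (by simpa using hb₂),
      (by simpa using ha₁), (by simpa using ha₂)⟩, ?_⟩
  exact ncard_edge_split hS he hf hef herep hfrep ha₁ hb₁ ha₂ hb₂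

lemma baseB {V : Type} [Fintype V] {G : SimpleGraph V} [DecidableRel G.Adj]
    (hG : MinimallyTEdgeConnected 2 G) (hdeg : ∀ v : V, 2 ≤ G.degree v)
    [Nonempty V] (hndiv : ¬ DivProp G) :
    ∀ g ∈ G.edgeSet, ∃ v, v ∈ g ∧ G.degree v = 2 := by
  intro g hg
  obtain ⟨h', hh'E, hh'ne, hdis⟩ := M2exists_partner hG hg
  obtain ⟨W, hW⟩ := exists_side (M2conn_del_one hG g) hdis
  have hsmall : W.ncard = 1 ∨ Wᶜ.ncard = 1 := by
    have h1 : 1 ≤ W.ncard := by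
      rw [Nat.one_le_iff_ne_zero, Ne, Set.ncard_eq_zero (Set.toFinite _)]
      exact Set.nonempty_iff_ne_empty.mp hW.ne
    have h2 : 1 ≤ Wᶜ.ncard := by
      rw [Nat.one_le_iff_ne_zero, Ne, Set.ncard_eq_zero (Set.toFinite _)]
      exact Set.nonempty_iff_ne_empty.mp hW.nec
    by_contra hc
    push_neg at hc
    exact hndiv ⟨g, h', W, hg, hh'E, Ne.symm hh'ne, hW, by omega, by omega⟩
  rcases hsmall with h1 | h1
  · exact deg2_of_singleton hdeg hg (Ne.symm hh'ne) hW h1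
  · exact deg2_of_singleton hdeg hg (Ne.symm hh'ne) hW.compl h1

theorem aux : ∀ (n : ℕ) (V : Type) [Fintype V] (G : SimpleGraph V),
    Fintype.card V = n → MinimallyTEdgeConnected 2 G → 4 ≤ n →
    G.edgeSet.ncard ≤ 2 * n - 4 := by
  intro n
  induction n using Nat.strong_induction_on with
  | _ n IHn =>
  intro V _inst G hcard hG h4
  classical
  letI : DecidableRel G.Adj := fun _ _ => Classical.dec _
  have hNE : Nonempty V := Fintype.card_pos_iff.mp (by omega)
  have hdeg : ∀ v, 2 ≤ G.degree v := M2degree_two_le hG (by omega)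
  subst hcard
  by_cases hdiv : DivProp G
  · obtain ⟨e, f, A, he, hf, hef, hS, hA2, hAc2⟩ := hdiv
    obtain ⟨a₁, a₂, b₁, b₂, X, Xc, hcount⟩ := divide_data hG he hf hef hS
    have hn' : A.ncard + Aᶜ.ncard = Fintype.card V := by
      rw [← Nat.card_eq_fintype_card]
      exact Set.ncard_add_ncard_compl A
    have IH' : ∀ (W : Type) [Fintype W] (H : SimpleGraph W),
        Fintype.card W < Fintype.card V → MinimallyTEdgeConnected 2 H →
        4 ≤ Fintype.card W → H.edgeSet.ncard ≤ 2 * Fintype.card W - 4 :=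
      fun W _ H hlt hmin hc4 => IHn _ hlt W H rfl hmin hc4
    have hbA := side_bound hG X IH' hA2 hAc2
    have hbB := side_bound hG Xc IH' hAc2 (by simpa using hA2)
    have hcc : (Aᶜ)ᶜ.ncard = A.ncard := by rw [compl_compl]
    have hnef : ¬ (a₁ = a₂ ∧ b₁ = b₂) := by
      rintro ⟨h1, h2⟩
      exact hef (X.he.trans (by rw [h1, h2, ← X.hf]))
    rcases hbA with h | ⟨hA2', hA1'⟩ | ⟨hA3', haeq, hA3b⟩ <;>
      rcases hbB with h' | ⟨hB2', hB1'⟩ | ⟨hB3', hbeq, hB3b⟩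
    · omega
    · omega
    · omega
    · omega
    · omega
    · omega
    · omega
    · omega
    · exact absurd ⟨haeq, hbeq⟩ hnef
  · have hB := baseB hG hdeg hdiv
    exact (base_count G hdeg hB (by omega)).1

end Aux

section Iso

lemma divide_strict {V : Type} [Fintype V] {G : SimpleGraph V}
    (hG : MinimallyTEdgeConnected 2 G) (h6 : 6 ≤ Fintype.card V)
    (hdiv : DivProp G) : G.edgeSet.ncard ≤ 2 * Fintype.card V - 5 := by
  classical
  obtain ⟨e, f, A, he, hf, hef, hS, hA2, hAc2⟩ := hdiv
  obtain ⟨a₁, a₂, b₁, b₂, X, Xc, hcount⟩ := divide_data hG he hf hef hS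
  have hn' : A.ncard + Aᶜ.ncard = Fintype.card V := by
    rw [← Nat.card_eq_fintype_card]
    exact Set.ncard_add_ncard_compl A
  have IH' : ∀ (W : Type) [Fintype W] (H : SimpleGraph W),
      Fintype.card W < Fintype.card V → MinimallyTEdgeConnected 2 H →
      4 ≤ Fintype.card W → H.edgeSet.ncard ≤ 2 * Fintype.card W - 4 :=
    fun W _ H _ hmin hc4 => aux _ W H rfl hmin hc4
  have hbA := side_bound hG X IH' hA2 hAc2
  have hbB := side_bound hG Xc IH' hAc2 (by simpa using hA2)
  have hcc : (Aᶜ)ᶜ.ncard = A.ncard := by rw [compl_compl]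
  have hnef : ¬ (a₁ = a₂ ∧ b₁ = b₂) := by
    rintro ⟨h1, h2⟩
    exact hef (X.he.trans (by rw [h1, h2, ← X.hf]))
  rcases hbA with h | ⟨hA2', hA1'⟩ | ⟨hA3', haeq, hA3b⟩ <;>
    rcases hbB with h' | ⟨hB2', hB1'⟩ | ⟨hB3', hbeq, hB3b⟩
  · omega
  · omega
  · omega
  · omega
  · omega
  · omega
  · omega
  · omega
  · exact absurd ⟨haeq, hbeq⟩ hnef

lemma build_iso {n : ℕ} (hn : 6 ≤ n) (G : SimpleGraph (Fin n)) [DecidableRel G.Adj]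
    {x y : Fin n} (hxy : x ≠ y) (hnadj : ¬ G.Adj x y)
    (hw : ∀ w, w ≠ x → w ≠ y → G.Adj w x ∧ G.Adj w y ∧ ∀ u, G.Adj w u → u = x ∨ u = y) :
    Nonempty (G ≃g completeBipartiteGraph (Fin 2) (Fin (n - 2))) := by
  classical
  set P : Fin n → Prop := fun v => v = x ∨ v = y with hP
  have hadj_iff : ∀ u v : Fin n, G.Adj u v ↔ ((P u ∧ ¬ P v) ∨ (¬ P u ∧ P v)) := by
    intro u v
    constructor
    · intro h
      by_cases hu : P u <;> by_cases hv : P v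
      · exfalso
        rcases hu with rfl | rfl <;> rcases hv with rfl | rfl
        · exact G.irrefl h
        · exact hnadj h
        · exact hnadj h.symm
        · exact G.irrefl h
      · exact Or.inl ⟨hu, hv⟩
      · exact Or.inr ⟨hu, hv⟩
      · exfalso
        have hu1 : u ≠ x := fun hc => hu (Or.inl hc)
        have hu2 : u ≠ y := fun hc => hu (Or.inr hc)
        rcases (hw u hu1 hu2).2.2 v h with rfl | rfl
        · exact hv (Or.inl rfl)
        · exact hv (Or.inr rfl)
    · rintro (⟨hu, hv⟩ | ⟨hu, hv⟩)
      · have hv' := hw v (fun hc => hv (Or.inl hc)) (fun hc => hv (Or.inr hc))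
        rcases hu with rfl | rfl
        · exact hv'.1.symm
        · exact hv'.2.1.symm
      · have hu' := hw u (fun hc => hu (Or.inl hc)) (fun hc => hu (Or.inr hc))
        rcases hv with rfl | rfl
        · exact hu'.1
        · exact hu'.2.1
  have hcard1 : Fintype.card {v : Fin n // P v} = 2 := by
    rw [Fintype.card_subtype]
    have : Finset.univ.filter P = {x, y} := by
      ext v
      simp [hP, Finset.mem_insert, Finset.mem_singleton]
    rw [this, Finset.card_pair hxy]
  have hcard2 : Fintype.card {v : Fin n // ¬ P v} = n - 2 := by
    rw [Fintype.card_subtype_compl, hcard1, Fintype.card_fin]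
  let eL : {v : Fin n // P v} ≃ Fin 2 := Fintype.equivFinOfCardEq hcard1
  let eR : {v : Fin n // ¬ P v} ≃ Fin (n - 2) := Fintype.equivFinOfCardEq hcard2
  let E : Fin n ≃ (Fin 2 ⊕ Fin (n - 2)) := (Equiv.sumCompl P).symm.trans (Equiv.sumCongr eL eR)
  have hEpos : ∀ (u : Fin n) (h : P u), E u = Sum.inl (eL ⟨u, h⟩) := by
    intro u h
    show (Equiv.sumCongr eL eR) ((Equiv.sumCompl P).symm u) = _
    rw [Equiv.sumCompl_symm_apply_of_pos h]
    rfl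
  have hEneg : ∀ (u : Fin n) (h : ¬ P u), E u = Sum.inr (eR ⟨u, h⟩) := by
    intro u h
    show (Equiv.sumCongr eL eR) ((Equiv.sumCompl P).symm u) = _
    rw [Equiv.sumCompl_symm_apply_of_neg h]
    rfl
  refine ⟨⟨E, ?_⟩⟩
  intro u v
  rw [hadj_iff]
  by_cases hu : P u <;> by_cases hv : P v
  · rw [hEpos u hu, hEpos v hv]
    simp [completeBipartiteGraph, hu, hv]
  · rw [hEpos u hu, hEneg v hv]
    simp [completeBipartiteGraph, hu, hv]
  · rw [hEneg u hu, hEpos v hv]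
    simp [completeBipartiteGraph, hu, hv]
  · rw [hEneg u hu, hEneg v hv]
    simp [completeBipartiteGraph, hu, hv]

end Iso

section Final

lemma iso_edge_ncard {V W : Type*} {G : SimpleGraph V} {H : SimpleGraph W} (φ : G ≃g H) :
    G.edgeSet.ncard = H.edgeSet.ncard := by
  rw [← Nat.card_coe_set_eq, ← Nat.card_coe_set_eq]
  exact Nat.card_congr φ.mapEdgeSet

lemma K_edge_ncard (k : ℕ) :
    (completeBipartiteGraph (Fin 2) (Fin k)).edgeSet.ncard = 2 * k := by
  classical
  set K := completeBipartiteGraph (Fin 2) (Fin k) with hK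
  letI : DecidableRel K.Adj := fun a b => Classical.dec _
  have hEc : K.edgeSet.ncard = K.edgeFinset.card := by
    rw [← SimpleGraph.coe_edgeFinset, Set.ncard_coe_finset]
  have hdegL : ∀ i : Fin 2, K.degree (Sum.inl i) = k := by
    intro i
    have : K.neighborFinset (Sum.inl i) =
        Finset.univ.map ⟨Sum.inr, Sum.inr_injective⟩ := by
      ext w
      cases w <;> simp [hK, SimpleGraph.mem_neighborFinset, completeBipartiteGraph]
    rw [SimpleGraph.degree, this, Finset.card_map, Finset.card_univ, Fintype.card_fin]
  have hdegR : ∀ j : Fin k, K.degree (Sum.inr j) = 2 := by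
    intro j
    have : K.neighborFinset (Sum.inr j) =
        Finset.univ.map ⟨Sum.inl, Sum.inl_injective⟩ := by
      ext w
      cases w <;> simp [hK, SimpleGraph.mem_neighborFinset, completeBipartiteGraph]
    rw [SimpleGraph.degree, this, Finset.card_map, Finset.card_univ, Fintype.card_fin]
  have hhs : ∑ v, K.degree v = 2 * K.edgeFinset.card :=
    SimpleGraph.sum_degrees_eq_twice_card_edges K
  rw [Fintype.sum_sum_type] at hhs
  have hL : ∑ i : Fin 2, K.degree (Sum.inl i) = 2 * k := by
    rw [Finset.sum_congr rfl (fun i _ => hdegL i), Finset.sum_const, Finset.card_univ,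
      Fintype.card_fin, smul_eq_mul]
  have hR : ∑ j : Fin k, K.degree (Sum.inr j) = 2 * k := by
    rw [Finset.sum_congr rfl (fun j _ => hdegR j), Finset.sum_const, Finset.card_univ,
      Fintype.card_fin, smul_eq_mul]
    omega
  rw [hL, hR] at hhs
  omega

end Final

theorem edge_bound_minimally_two_edge_connected (n : ℕ) (hn : 6 ≤ n)
    (G : SimpleGraph (Fin n)) [DecidableRel G.Adj]
    (hG : MinimallyTEdgeConnected 2 G) :
    G.edgeFinset.card ≤ 2 * (n - 2) ∧
      (G.edgeFinset.card = 2 * (n - 2) ↔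
        Nonempty (G ≃g completeBipartiteGraph (Fin 2) (Fin (n - 2)))) := by
  have hEc : G.edgeFinset.card = G.edgeSet.ncard := by
    rw [← SimpleGraph.coe_edgeFinset, Set.ncard_coe_finset]
  have hcard : Fintype.card (Fin n) = n := Fintype.card_fin n
  have hbound := aux n (Fin n) G hcard hG (by omega)
  refine ⟨by omega, ?_, ?_⟩
  · intro hmeq
    have hmeq' : G.edgeSet.ncard = 2 * n - 4 := by omega
    have hndiv : ¬ DivProp G := by
      intro hdiv
      have := divide_strict hG (by rw [hcard]; omega) hdiv
      rw [hcard] at this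
      omega
    have hNE : Nonempty (Fin n) := ⟨⟨0, by omega⟩⟩
    have hdeg : ∀ v, 2 ≤ G.degree v := M2degree_two_le hG (by rw [hcard]; omega)
    have hB := baseB hG hdeg hndiv
    obtain ⟨x, y, hxy, hnadj, hw⟩ := (base_count G hdeg hB (by rw [hcard]; omega)).2
      (by rw [hcard]; omega) (by rw [hcard]; omega)
    exact build_iso hn G hxy hnadj hw
  · rintro ⟨φ⟩
    have hiso := iso_edge_ncard φ
    rw [K_edge_ncard (n-2)] at hiso
    omega
end

section
/- Let p > 1 be an integer and n ≥ 7 an odd integer. Then 3·((n+1)/2)^p + ((n-1)/2)^p + (n-4) ≤ (n-1)^p + (n-1)·2^p. (Equivalently, the p-th power sum of the n-tuple ((n+1)/2, (n+1)/2, (n+1)/2, (n-1)/2, 1, …, 1) is at most that of (n-1, 2, …, 2, 2).) -/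
theorem mul_two_pow_le_pow {c : ℝ} (hc : 4 ≤ c) {p : ℕ} (hp : 2 ≤ p) : c * 2 ^ p ≤ c ^ p := by
  induction p, hp using Nat.le_induction with
  | base => nlinarith
  | succ p _ ih =>
    calc c * 2 ^ (p + 1) = 2 * (c * 2 ^ p) := by ring
      _ ≤ c * c ^ p := by gcongr; linarith
      _ = c ^ (p + 1) := by ring

/-- At `p = 2` this is an equality. Multiplying the case `p` by `(x + 1) / 2` gives the case
`p + 1` up to the nonnegative defect
`(x - 3) / 2 * ((x - 1) ^ p - (x - 1) * 2 ^ p) + ((x - 1) / 2) ^ p + (x - 1) / 2 * (x - 4)`. -/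
theorem pow_sum_lambda2_le_pow_sum_lambda1 {x : ℝ} (hx : 5 ≤ x) {p : ℕ} (hp : 2 ≤ p) :
    3 * ((x + 1) / 2) ^ p + ((x - 1) / 2) ^ p + (x - 4) ≤ (x - 1) ^ p + (x - 1) * 2 ^ p := by
  induction p, hp using Nat.le_induction with
  | base => nlinarith
  | succ p hp ih =>
    have ih' := mul_le_mul_of_nonneg_left ih (by linarith : (0 : ℝ) ≤ (x + 1) / 2)
    have hgap := mul_le_mul_of_nonneg_left (mul_two_pow_le_pow (by linarith : (4 : ℝ) ≤ x - 1) hp)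
      (by linarith : (0 : ℝ) ≤ (x - 3) / 2)
    have hb : 0 ≤ ((x - 1) / 2) ^ p := pow_nonneg (by linarith) p
    have hx4 : 0 ≤ (x - 1) / 2 * (x - 4) := mul_nonneg (by linarith) (by linarith)
    rw [pow_succ, pow_succ, pow_succ, pow_succ]
    linear_combination ih' + hgap + hb + hx4

theorem lambda2_le_lambda1_general (p n : ℕ) (hp : 1 < p) (hn : 7 ≤ n) :
    3 * (((n : ℝ) + 1) / 2) ^ p + (((n : ℝ) - 1) / 2) ^ p + ((n : ℝ) - 4) ≤
      ((n : ℝ) - 1) ^ p + ((n : ℝ) - 1) * 2 ^ p :=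
  pow_sum_lambda2_le_pow_sum_lambda1 (by norm_num; omega) hp

theorem lambda2_le_lambda1 (p n : ℕ) (hp : 1 < p) (hn : 7 ≤ n) (hodd : Odd n) :
    3 * (((n : ℝ) + 1) / 2) ^ p + (((n : ℝ) - 1) / 2) ^ p + ((n : ℝ) - 4) ≤
      ((n : ℝ) - 1) ^ p + ((n : ℝ) - 1) * 2 ^ p :=
  lambda2_le_lambda1_general p n hp hn
end

section
/- Let p > 1 be an integer, n ≥ 7 an odd integer, and q an integer with 2 ≤ q < (n-1)/2. Set r = ⌊(q-1)(n-2)/q⌋ and ε = (q-1)(n-2) - q·r. Then (n-q)^p + (n-r-2)(q+1)^p + (q+1-ε)^p + r < (n-1)^p + (n-1)·2^p. -/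
/-!
Put `S = ∑_{i<p} (q+1)^i`, so that `(q+1)^p = 1 + q S`. On `[1, q+1]` the convex function
`x ↦ x^p` lies below its chord, `x^p ≤ 1 + (x-1) S`, which bounds the part `q+1-ε`.
The division identity `q r + ε = (q-1)(n-2)` then collapses everything except the largest part to
`(n-1) + (n+q-2) S`. What remains is an inequality in `A = n-1` and `T = q+1 ≥ 3` alone, proved by
induction on `p`; it needs `A ≥ 2T`, which is where the oddness of `n` enters.
-/

open Finset

theorem pow_le_one_add_mul_geom_sum {x T : ℝ} (h1x : 1 ≤ x) (hxT : x ≤ T) (p : ℕ) :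
    x ^ p ≤ 1 + (x - 1) * ∑ i ∈ range p, T ^ i := by
  have hgeom : x ^ p = 1 + (x - 1) * ∑ i ∈ range p, x ^ i := by
    linear_combination (geom_sum_mul x p).symm
  rw [hgeom]
  gcongr

theorem mul_two_pow_le_pow_s8 {A B : ℝ} (hB : 2 ≤ B) (hAB : 4 * A ≤ B ^ 2) {p : ℕ}
    (hp : 2 ≤ p) :
    A * 2 ^ p ≤ B ^ p := by
  obtain ⟨k, rfl⟩ := Nat.exists_eq_add_of_le' hp
  calc A * 2 ^ (k + 2) = 4 * A * 2 ^ k := by ring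
    _ ≤ B ^ 2 * B ^ k := by gcongr
    _ = B ^ (k + 2) := by ring

theorem pow_add_geom_sum_mul_lt_pow_add_mul_two_pow {A T : ℝ} (hT : 2 < T) (hA : 2 * T ≤ A)
    {p : ℕ} (hp : 2 ≤ p) :
    (A - T + 2) ^ p + A + (∑ i ∈ range p, T ^ i) * (A + T - 2) < A ^ p + A * 2 ^ p := by
  induction p, hp using Nat.le_induction with
  | base =>
    simp only [geom_sum_two]
    nlinarith [mul_pos (sub_pos.2 hT) (by linarith : 0 < A - 2 * T + 1)]
  | succ p hp ih =>
    set B := A - T + 2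
    have hBA : B ^ p ≤ A ^ p := pow_le_pow_left₀ (by linarith) (by linarith) p
    have hAB : A * 2 ^ p ≤ B ^ p :=
      mul_two_pow_le_pow_s8 (by linarith) (by nlinarith [sq_nonneg (A / 2 - 2)]) hp
    rw [geom_sum_succ]
    -- the gain over `T` times the previous inequality splits into three nonnegative terms
    have hgain : 0 ≤ (A - T) * (A ^ p - B ^ p) + (T - 2) * (B ^ p - A * 2 ^ p) +
        (T - 2) * (A - 1) :=
      add_nonneg (add_nonneg (mul_nonneg (by linarith) (sub_nonneg.2 hBA))
        (mul_nonneg (by linarith) (sub_nonneg.2 hAB))) (mul_nonneg (by linarith) (by linarith))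
    have hstep := mul_lt_mul_of_pos_left ih (by linarith : (0 : ℝ) < T)
    linear_combination hstep + hgain

theorem lambda3_lt_lambda1_general (p n q : ℕ) (hp : 1 < p) (hodd : Odd n)
    (hq2 : 2 ≤ q) (hq : 2 * q < n - 1)
    (r ε : ℕ) (hr : r = (q - 1) * (n - 2) / q) (hε : ε = (q - 1) * (n - 2) - q * r) :
    ((n : ℝ) - q) ^ p + ((n : ℝ) - r - 2) * ((q : ℝ) + 1) ^ p +
        ((q : ℝ) + 1 - ε) ^ p + (r : ℝ) <
      ((n : ℝ) - 1) ^ p + ((n : ℝ) - 1) * 2 ^ p := by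
  have hε_mod : ε = (q - 1) * (n - 2) % q := by rw [hε, hr, Nat.mod_eq_sub_mul_div]
  have hεq : (ε : ℝ) ≤ q := by exact_mod_cast (hε_mod ▸ Nat.mod_lt _ (by omega)).le
  have hdiv : (q : ℝ) * r + ε = (q - 1) * (n - 2) := by
    have h : q * r + ε = (q - 1) * (n - 2) := by rw [hε_mod, hr, Nat.div_add_mod]
    have hR := congrArg (Nat.cast : ℕ → ℝ) h
    push_cast [Nat.cast_sub (by omega : 1 ≤ q), Nat.cast_sub (by omega : 2 ≤ n)] at hR
    exact hR
  -- oddness upgrades `2 * q < n - 1` to `2 * q + 3 ≤ n`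
  have hn : 2 * ((q : ℝ) + 1) ≤ n - 1 := by
    obtain ⟨k, rfl⟩ := hodd
    have : (2 * q + 3 : ℝ) ≤ 2 * k + 1 := by exact_mod_cast (by omega : 2 * q + 3 ≤ 2 * k + 1)
    push_cast
    linarith
  have hfirst := pow_add_geom_sum_mul_lt_pow_add_mul_two_pow
    (A := n - 1) (T := q + 1) (by norm_cast; omega) hn hp
  set S := ∑ i ∈ range p, ((q : ℝ) + 1) ^ i
  have hmiddle : ((q : ℝ) + 1) ^ p = 1 + q * S := by
    linear_combination (geom_sum_mul ((q : ℝ) + 1) p).symm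
  have hlast : ((q : ℝ) + 1 - ε) ^ p ≤ 1 + (q - ε) * S := by
    convert pow_le_one_add_mul_geom_sum (x := q + 1 - ε) (T := q + 1)
      (by linarith) (by simp) p using 3
    ring
  rw [hmiddle]
  linear_combination hlast + hfirst - S * hdiv

theorem lambda3_lt_lambda1 (p n q : ℕ) (hp : 1 < p) (hn : 7 ≤ n) (hodd : Odd n)
    (hq2 : 2 ≤ q) (hq : 2 * q < n - 1)
    (r ε : ℕ) (hr : r = (q - 1) * (n - 2) / q) (hε : ε = (q - 1) * (n - 2) - q * r) :
    ((n : ℝ) - q) ^ p + ((n : ℝ) - r - 2) * ((q : ℝ) + 1) ^ p +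
        ((q : ℝ) + 1 - ε) ^ p + (r : ℝ) <
      ((n : ℝ) - 1) ^ p + ((n : ℝ) - 1) * 2 ^ p :=
  lambda3_lt_lambda1_general p n q hp hodd hq2 hq r ε hr hε
end

section
/- Let p > 1 be an integer and n ≥ 6 an even integer. Then (n/2 + 1)^p + 2·(n/2)^p + (n/2 - 1)^p + (n-4) < (n-1)^p + (n-2)·2^p + 1. (Equivalently, the p-th power sum of the n-tuple (n/2+1, n/2, n/2, n/2-1, 1, …, 1) is strictly less than that of (n-1, 2, …, 2, 1).) -/
/-!
Put `x = n / 2`; the claim is proved for every real `x ≥ 3` by induction on `p ≥ 2`.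
From `p` to `p + 1` the gap between the two sides at least doubles as soon as
`(x - 1)(x + 1)^p + (2x - 4)x^p + (x - 3)(x - 1)^p ≤ (2x - 3)(2x - 1)^p`, and this follows from
the weighted inequality `weighted_pow_sum_le`, itself an induction on `p` in which the defect
gets multiplied by at least `x + 1` at each step.
-/

section
variable {x : ℝ}

lemma weighted_pow_sum_le (hx : 3 ≤ x) {p : ℕ} (hp : 2 ≤ p) :
    x * (x + 1) ^ p + (2 * x - 2) * x ^ p + (x - 2) * (x - 1) ^ p ≤
      (2 * x - 2) * (2 * x - 1) ^ p := by
  induction p, hp using Nat.le_induction with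
  | base => nlinarith [sq_nonneg (x - 3)]
  | succ p _ ih =>
    have hB : 0 ≤ x ^ p := by positivity
    have hC : 0 ≤ (x - 1) ^ p := pow_nonneg (by linarith) p
    have hD : 0 ≤ (2 * x - 1) ^ p := pow_nonneg (by linarith) p
    simp only [pow_succ]
    nlinarith [mul_nonneg (by linarith : (0:ℝ) ≤ x + 1) (sub_nonneg.2 ih),
      mul_nonneg (by nlinarith : (0:ℝ) ≤ (2 * x - 2) * (x - 2)) hD,
      mul_nonneg (by linarith : (0:ℝ) ≤ 2 * x - 2) hB,
      mul_nonneg (by linarith : (0:ℝ) ≤ x - 2) hC]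

lemma pow_sum_lt (hx : 3 ≤ x) {p : ℕ} (hp : 2 ≤ p) :
    (x + 1) ^ p + 2 * x ^ p + (x - 1) ^ p + (2 * x - 4) <
      (2 * x - 1) ^ p + (2 * x - 2) * 2 ^ p + 1 := by
  induction p, hp using Nat.le_induction with
  | base => nlinarith
  | succ p hp ih =>
    have hA : 0 ≤ (x + 1) ^ p := by positivity
    have hB : 0 ≤ x ^ p := by positivity
    have hC : 0 ≤ (x - 1) ^ p := pow_nonneg (by linarith) p
    have hgap : (x - 1) * (x + 1) ^ p + (2 * x - 4) * x ^ p + (x - 3) * (x - 1) ^ p ≤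
        (2 * x - 3) * (2 * x - 1) ^ p := by
      refine le_of_mul_le_mul_left ?_ (by linarith : (0:ℝ) < 2 * x - 2)
      nlinarith [weighted_pow_sum_le hx hp, mul_nonneg (by linarith : (0:ℝ) ≤ x - 2) hA,
        mul_nonneg (by linarith : (0:ℝ) ≤ 2 * x - 2) hB, mul_nonneg (by linarith : (0:ℝ) ≤ x) hC]
    simp only [pow_succ]
    linear_combination 2 * ih + hgap + 2 * hx

end

theorem mu2_lt_mu1_general (p n : ℕ) (hp : 1 < p) (hn : 6 ≤ n) :
    ((n : ℝ) / 2 + 1) ^ p + 2 * ((n : ℝ) / 2) ^ p + ((n : ℝ) / 2 - 1) ^ p +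
        ((n : ℝ) - 4) <
      ((n : ℝ) - 1) ^ p + ((n : ℝ) - 2) * 2 ^ p + 1 := by
  have hx : (3 : ℝ) ≤ n / 2 := by
    have : (6 : ℝ) ≤ n := by exact_mod_cast hn
    linarith
  have h := pow_sum_lt hx hp
  rwa [show 2 * ((n : ℝ) / 2) = n by ring] at h

theorem mu2_lt_mu1 (p n : ℕ) (hp : 1 < p) (hn : 6 ≤ n) (heven : Even n) :
    ((n : ℝ) / 2 + 1) ^ p + 2 * ((n : ℝ) / 2) ^ p + ((n : ℝ) / 2 - 1) ^ p +
        ((n : ℝ) - 4) <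
      ((n : ℝ) - 1) ^ p + ((n : ℝ) - 2) * 2 ^ p + 1 :=
  mu2_lt_mu1_general p n hp hn
end

section
/- Let p > 1 be an integer, n ≥ 6 an even integer, and q an integer with 2 ≤ q < n/2 - 1. Set r = ⌊((q-1)(n-2)+1)/q⌋ and ε = (q-1)(n-2) + 1 - q·r. Then (n-q)^p + (n-r-2)(q+1)^p + (q+1-ε)^p + r < (n-1)^p + (n-2)·2^p + 1. -/
set_option maxHeartbeats 1000000 in
lemma mu3_key (N Q e s R : ℝ) (hq : 2 ≤ Q) (hN : 2*Q + 3 ≤ N)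
    (he0 : 0 ≤ e) (he1 : e ≤ Q - 1)
    (hs : Q * s = N - 3 + e) (hR : R = N - 2 - s) :
    ∀ p : ℕ, 2 ≤ p →
      (N - Q)^p + s*(Q+1)^p + (Q+1-e)^p + R < (N-1)^p + (N-2)*2^p + 1 := by
  have hQ0 : (0:ℝ) < Q := by linarith
  have hs0 : 0 < s := by
    by_contra h; push_neg at h
    nlinarith [mul_nonneg hQ0.le (neg_nonneg.2 h)]
  have hsN : s ≤ N - 3 := by
    by_contra h; push_neg at h
    have h2 : Q * (N-3) < Q * s := mul_lt_mul_of_pos_left h hQ0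
    nlinarith [mul_nonneg (by linarith : (0:ℝ) ≤ Q - 1) (by linarith : (0:ℝ) ≤ N - 4)]
  have hR1 : 1 ≤ R := by rw [hR]; linarith
  have hF0 : (2:ℝ) ≤ (Q-1)*N - 2*Q^2+Q+1 := by
    nlinarith [mul_nonneg (by linarith : (0:ℝ) ≤ Q-1) (by linarith : (0:ℝ) ≤ N-2*Q-3)]
  have hF1 : (3:ℝ) ≤ (Q-1)*(N-2*Q) := by
    nlinarith [mul_nonneg (by linarith : (0:ℝ) ≤ Q-2) (by linarith : (0:ℝ) ≤ N-2*Q)]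
  have hG0 : (0:ℝ) < (N-1)^3 - (N-Q)^3 - (N-3)*(Q^2+3*Q+3) - (Q+1)^3 + 7*N - 13 := by
    nlinarith [mul_nonneg (by linarith : (0:ℝ) ≤ Q-1) (by linarith : (0:ℝ) ≤ N-2*Q-3),
      mul_nonneg (mul_nonneg (by linarith : (0:ℝ) ≤ Q-1) (by linarith : (0:ℝ) ≤ N-2*Q-3)) (by linarith : (0:ℝ) ≤ N-2*Q-3),
      mul_nonneg (mul_nonneg (by linarith : (0:ℝ) ≤ Q-1) (by linarith : (0:ℝ) ≤ Q-2)) (by linarith : (0:ℝ) ≤ N-2*Q-3),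
      mul_nonneg (mul_nonneg (by linarith : (0:ℝ) ≤ Q-2) (by linarith : (0:ℝ) ≤ Q-2)) (by linarith : (0:ℝ) ≤ Q-2),
      sq_nonneg (Q-2), sq_nonneg (N-2*Q-3)]
  have hG1 : (0:ℝ) < (N-1)^3 - (N-Q)^3 - (N+Q-4)*(Q^2+3*Q+3) - 8 + 7*N - 13 := by
    nlinarith [mul_nonneg (by linarith : (0:ℝ) ≤ Q-1) (by linarith : (0:ℝ) ≤ N-2*Q-3),
      mul_nonneg (mul_nonneg (by linarith : (0:ℝ) ≤ Q-1) (by linarith : (0:ℝ) ≤ N-2*Q-3)) (by linarith : (0:ℝ) ≤ N-2*Q-3),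
      mul_nonneg (mul_nonneg (by linarith : (0:ℝ) ≤ Q-1) (by linarith : (0:ℝ) ≤ Q-2)) (by linarith : (0:ℝ) ≤ N-2*Q-3),
      mul_nonneg (mul_nonneg (by linarith : (0:ℝ) ≤ Q-2) (by linarith : (0:ℝ) ≤ Q-2)) (by linarith : (0:ℝ) ≤ Q-2),
      sq_nonneg (Q-2), sq_nonneg (N-2*Q-3)]
  have base2 : (N - Q)^2 + s*(Q+1)^2 + (Q+1-e)^2 + R < (N-1)^2 + (N-2)*2^2 + 1 := by
    have hA : s*(Q+1)^2 + R = (N-3+e)*(Q+2) + (N-2) := by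
      rw [hR]; linear_combination (Q + 2) * hs
    nlinarith [mul_nonneg (by linarith : (0:ℝ) ≤ Q-1-e) (by linarith : (0:ℝ) ≤ (Q-1)*N - 2*Q^2+Q+1 - 2),
      mul_nonneg he0 (by linarith : (0:ℝ) ≤ (Q-1)*(N-2*Q) - 3),
      mul_nonneg he0 (by linarith : (0:ℝ) ≤ Q-1-e)]
  have base3 : (N - Q)^3 + s*(Q+1)^3 + (Q+1-e)^3 + R < (N-1)^3 + (N-2)*2^3 + 1 := by
    have hA : s*(Q+1)^3 + R = (N-3+e)*(Q^2+3*Q+3) + (N-2) := by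
      rw [hR]; linear_combination (Q^2 + 3*Q + 3) * hs
    nlinarith [mul_nonneg (by linarith : (0:ℝ) ≤ Q-1-e) hG0.le,
      mul_nonneg he0 hG1.le,
      mul_nonneg (mul_nonneg he0 (by linarith : (0:ℝ) ≤ Q-1-e)) (by linarith : (0:ℝ) ≤ 2*Q+4-e)]
  have main : ∀ m : ℕ, 3 ≤ m →
      (N - Q)^m + s*(Q+1)^m + (Q+1-e)^m + R < (N-1)^m + (N-2)*2^m + 1 := by
    intro m hm
    induction m, hm using Nat.le_induction with
    | base => exact base3
    | succ k hk ih =>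
      have hNQ : (0:ℝ) < N - Q := by linarith
      have hq1 : (0:ℝ) ≤ Q + 1 := by linarith
      have he2 : (0:ℝ) ≤ Q + 1 - e := by linarith
      have hA : (N-Q)^(k+1) + s*(Q+1)^(k+1) + (Q+1-e)^(k+1)
          ≤ (N-Q) * ((N-Q)^k + s*(Q+1)^k + (Q+1-e)^k) := by
        have t1 : s*(Q+1)^(k+1) ≤ (N-Q) * (s * (Q+1)^k) := by
          rw [pow_succ]
          nlinarith [mul_nonneg (mul_nonneg hs0.le (pow_nonneg hq1 k)) (by linarith : (0:ℝ) ≤ N - Q - (Q+1))]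
        have t2 : (Q+1-e)^(k+1) ≤ (N-Q) * (Q+1-e)^k := by
          rw [pow_succ]
          nlinarith [mul_nonneg (pow_nonneg he2 k) (by linarith : (0:ℝ) ≤ N - Q - (Q+1-e))]
        have t0 : (N-Q)^(k+1) = (N-Q) * (N-Q)^k := by ring
        linarith [t0, t1, t2]
      have h3 : (N-Q) * ((N-Q)^k + s*(Q+1)^k + (Q+1-e)^k)
          < (N-Q) * ((N-1)^k + (N-2)*2^k + 1 - R) :=
        mul_lt_mul_of_pos_left (by linarith) hNQ
      have hkey : (N-4)*(N-2)*2^k ≤ (N-1)^k := by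
        obtain ⟨m, rfl⟩ : ∃ m, k = m + 3 := ⟨k - 3, by omega⟩
        have h5 : (2:ℝ)^m ≤ (N-1)^m := pow_le_pow_left₀ (by norm_num) (by linarith) m
        have h6 : 8*((N-4)*(N-2)) ≤ (N-1)^3 := by
          nlinarith [sq_nonneg (N-7), mul_nonneg (sq_nonneg (N-7)) (by linarith : (0:ℝ) ≤ N-7)]
        calc (N-4)*(N-2)*2^(m+3) = (8*((N-4)*(N-2))) * 2^m := by ring
          _ ≤ (N-1)^3 * (N-1)^m := by
              exact mul_le_mul h6 h5 (pow_nonneg (by norm_num) m) (pow_nonneg (by linarith) 3)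
          _ = (N-1)^(m+3) := by ring
      have h4 : (N-Q) * ((N-1)^k + (N-2)*2^k + 1 - R)
          ≤ (N-1)^(k+1) + (N-2)*2^(k+1) + 1 - R := by
        have p1 : (0:ℝ) ≤ (Q-2) * (N-1)^k := mul_nonneg (by linarith) (pow_nonneg (by linarith) k)
        have p2 : (0:ℝ) ≤ (Q-2) * ((N-2)*2^k) :=
          mul_nonneg (by linarith) (mul_nonneg (by linarith) (pow_nonneg (by norm_num) k))
        have p3 : (0:ℝ) ≤ (N-Q-1) * (R-1) := mul_nonneg (by linarith) (by linarith)
        rw [pow_succ (N-1) k, pow_succ 2 k]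
        nlinarith [hkey, p1, p2, p3]
      linarith [hA, h3, h4]
  intro p hp
  rcases Nat.lt_or_ge p 3 with h | h
  · have hp2 : p = 2 := by omega
    subst hp2; exact base2
  · exact main p h

theorem mu3_lt_mu1 (p n q : ℕ) (hp : 1 < p) (hn : 6 ≤ n) (heven : Even n)
    (hq2 : 2 ≤ q) (hq : 2 * q < n - 2)
    (r ε : ℕ) (hr : r = ((q - 1) * (n - 2) + 1) / q)
    (hε : ε = (q - 1) * (n - 2) + 1 - q * r) :
    ((n : ℝ) - q) ^ p + ((n : ℝ) - r - 2) * ((q : ℝ) + 1) ^ p +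
        ((q : ℝ) + 1 - ε) ^ p + (r : ℝ) <
      ((n : ℝ) - 1) ^ p + ((n : ℝ) - 2) * 2 ^ p + 1 := by
  have hq0 : 0 < q := by omega
  have hdm := Nat.div_add_mod ((q - 1) * (n - 2) + 1) q
  have hmod := Nat.mod_lt ((q - 1) * (n - 2) + 1) hq0
  have hK : q * r + ε = (q - 1) * (n - 2) + 1 := by
    subst hr; omega
  have hεq : ε + 1 ≤ q := by
    subst hr; omega
  have hn3 : 2 * q + 3 ≤ n := by omega
  have hcast : (q:ℝ) * r + ε = ((q:ℝ) - 1) * ((n:ℝ) - 2) + 1 := by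
    have h := congrArg (fun t : ℕ => (t:ℝ)) hK
    push_cast [Nat.cast_sub (show 1 ≤ q by omega), Nat.cast_sub (show 2 ≤ n by omega)] at h
    linarith
  have hs : (q:ℝ) * ((n:ℝ) - r - 2) = (n:ℝ) - 3 + ε := by
    linear_combination -hcast
  have hrr : (r:ℝ) = (n:ℝ) - 2 - ((n:ℝ) - r - 2) := by ring
  have hNn : 2*(q:ℝ) + 3 ≤ (n:ℝ) := by exact_mod_cast hn3
  have hqQ : (2:ℝ) ≤ q := by exact_mod_cast hq2
  have he1 : (ε:ℝ) ≤ (q:ℝ) - 1 := by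
    have : ((ε:ℝ) + 1) ≤ q := by exact_mod_cast hεq
    linarith
  exact mu3_key (n:ℝ) (q:ℝ) (ε:ℝ) ((n:ℝ) - r - 2) (r:ℝ) hqQ hNn
    (by positivity) he1 hs hrr p hp
end

section
/- Let p ≥ 5 be an integer and n an odd integer with n ≥ 2p - 1. Then (n-1)^p + (n-1)·2^p < 2(n-2)^p + (n-2)·2^p; equivalently, e_p(F_n) < e_p(K_{2,n-2}). -/
/-!
With `x = n - 2` the inequality reads `(x + 1)^p + 2^p < 2 x^p`. Since `(1 + 1/x)^p ≤ exp (p / x)`,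
it suffices that `p / x ≤ 2/3` and `x ≥ 8`, which hold except for `p = 5`, `n = 9` (checked
numerically): then `exp (2/3) < 1.95` leaves room for `(2/x)^p ≤ 4^{-5}`.
-/

open Real

lemma exp_two_div_three_lt : exp (2 / 3) < 1.95 := by
  have hcube : exp (2 / 3) ^ 3 = exp 1 ^ 2 := by
    rw [← exp_nat_mul, ← exp_nat_mul]
    norm_num
  have he : exp 1 ^ 2 < 2.7182818286 ^ 2 := by
    gcongr
    exact exp_one_lt_d9
  -- `exp 1 ^ 2 < 7.39 < 1.95 ^ 3`
  by_contra! h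
  nlinarith [pow_le_pow_left₀ (by norm_num) h 3]

lemma add_one_pow_le_pow_mul_exp {x : ℝ} (hx : 0 < x) (p : ℕ) :
    (x + 1) ^ p ≤ x ^ p * exp (p / x) := by
  have hbase : x + 1 ≤ x * exp (1 / x) := by
    calc x + 1 = x * (1 / x + 1) := by field_simp; ring
      _ ≤ x * exp (1 / x) := by gcongr; exact add_one_le_exp _
  calc (x + 1) ^ p ≤ (x * exp (1 / x)) ^ p := by gcongr
    _ = x ^ p * exp (p / x) := by rw [mul_pow, ← exp_nat_mul, mul_one_div]

lemma two_pow_le_pow_div {x : ℝ} (hx : 8 ≤ x) {p : ℕ} (hp : 5 ≤ p) :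
    (2 : ℝ) ^ p ≤ x ^ p / 1024 := by
  calc (2 : ℝ) ^ p ≤ (x / 4) ^ p := by gcongr; linarith
    _ = x ^ p / 4 ^ p := div_pow x 4 p
    _ ≤ x ^ p / 4 ^ 5 := by gcongr; norm_num
    _ = x ^ p / 1024 := by norm_num

lemma add_one_pow_add_two_pow_lt {x : ℝ} (hx : 8 ≤ x) {p : ℕ} (hp : 5 ≤ p) (hpx : 3 * p ≤ 2 * x) :
    (x + 1) ^ p + 2 ^ p < 2 * x ^ p := by
  have hexp : exp (p / x) ≤ exp (2 / 3) := by
    rw [exp_le_exp, div_le_div_iff₀ (by linarith) (by norm_num)]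
    linarith
  have hpow : (x + 1) ^ p < x ^ p * 1.95 :=
    calc (x + 1) ^ p ≤ x ^ p * exp (p / x) := add_one_pow_le_pow_mul_exp (by linarith) p
      _ ≤ x ^ p * exp (2 / 3) := by gcongr
      _ < x ^ p * 1.95 := by gcongr; exact exp_two_div_three_lt
  linarith [two_pow_le_pow_div hx hp, pow_pos (by linarith : (0 : ℝ) < x) p]

theorem epF_lt_epK2_general (p n : ℕ) (hp : 5 ≤ p) (hn : 2 * p - 1 ≤ n) :
    ((n : ℝ) - 1) ^ p + ((n : ℝ) - 1) * 2 ^ p <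
      2 * ((n : ℝ) - 2) ^ p + ((n : ℝ) - 2) * 2 ^ p := by
  by_cases hsmall : p = 5 ∧ n = 9
  · obtain ⟨rfl, rfl⟩ := hsmall
    norm_num
  have hn10 : (10 : ℝ) ≤ n := by exact_mod_cast (by omega : 10 ≤ n)
  have hpn : (3 * p + 4 : ℝ) ≤ 2 * n := by exact_mod_cast (by omega : 3 * p + 4 ≤ 2 * n)
  have key := add_one_pow_add_two_pow_lt (x := (n : ℝ) - 2) (by linarith) hp (by linarith)
  rw [show (n : ℝ) - 2 + 1 = n - 1 by ring] at key
  linear_combination key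

theorem epF_lt_epK2 (p n : ℕ) (hp : 5 ≤ p) (hodd : Odd n) (hn : 2 * p - 1 ≤ n) :
    ((n : ℝ) - 1) ^ p + ((n : ℝ) - 1) * 2 ^ p <
      2 * ((n : ℝ) - 2) ^ p + ((n : ℝ) - 2) * 2 ^ p :=
  epF_lt_epK2_general p n hp hn
end

section
/- Let p ≥ 12 be an integer and n an integer with n ≥ 2p. Then (n-1)^p + (n-1)·3^p < 3(n-3)^p + (n-3)·3^p; equivalently, e_p(W_n) < e_p(K_{3,n-3}). -/
/-!
Put `m = n - 3 ≥ 21`; the claim becomes `(m + 2)^p + 2·3^p < 3·m^p`. Since `2p ≤ m + 3`, the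
bound `log (1 + x) ≤ x - x²/2 + x³/3` at `x = 2/m` gives `(1 + 2/m)^p ≤ exp (23/21) < 2.995`,
while `2·3^p` is negligible against `m^p ≥ 7^p·3^p`.
-/

open Real Finset

lemma one_add_le_exp_cubic {x : ℝ} (hx : 0 ≤ x) : 1 + x ≤ exp (x - x ^ 2 / 2 + x ^ 3 / 3) := by
  set t := x - x ^ 2 / 2 + x ^ 3 / 3 with ht
  have ht0 : 0 ≤ t := by nlinarith [sq_nonneg (x - 3 / 4)]
  have hexp : 1 + t + t ^ 2 / 2 + t ^ 3 / 6 ≤ exp t := by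
    simpa [sum_range_succ, Nat.factorial] using sum_le_exp_of_nonneg ht0 4
  have hq : 0 ≤ 270 + 162 * x - 171 * x ^ 2 + 126 * x ^ 3 - 36 * x ^ 4 + 8 * x ^ 5 := by
    nlinarith [mul_nonneg hx (sq_nonneg (x - 1)), mul_nonneg hx (sq_nonneg (x - 2)),
      mul_nonneg (pow_nonneg hx 3) (sq_nonneg (x - 2)), mul_nonneg hx (sq_nonneg (x ^ 2 - 2 * x))]
  have hgap : t + t ^ 2 / 2 + t ^ 3 / 6 - x =
      x ^ 4 * (270 + 162 * x - 171 * x ^ 2 + 126 * x ^ 3 - 36 * x ^ 4 + 8 * x ^ 5) / 1296 := by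
    rw [ht]; ring
  nlinarith [mul_nonneg (pow_nonneg hx 4) hq]

lemma exp_twentythree_div_twentyone_lt : exp (23 / 21) < 599 / 200 := by
  have he := exp_one_lt_d9
  have hsmall := exp_bound' (x := 2 / 21) (by norm_num) (by norm_num) (n := 3) (by norm_num)
  norm_num [sum_range_succ, Nat.factorial] at hsmall
  rw [show (23 / 21 : ℝ) = 1 + 2 / 21 by norm_num, exp_add]
  nlinarith [exp_pos 1, exp_pos (2 / 21)]

lemma one_add_two_div_pow_lt {m : ℝ} {p : ℕ} (hm : 21 ≤ m) (hpm : 2 * p ≤ m + 3) :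
    (1 + 2 / m) ^ p < 599 / 200 := by
  have hm0 : 0 < m := by linarith
  set t := 2 / m - (2 / m) ^ 2 / 2 + (2 / m) ^ 3 / 3 with ht
  have ht0 : 0 ≤ t := by rw [ht]; nlinarith [sq_nonneg (2 / m - 3 / 4), div_pos two_pos hm0]
  have hpt : p * t ≤ 23 / 21 := calc
    p * t ≤ (m + 3) / 2 * t := by gcongr; linarith
    _ = (3 * m ^ 3 + 6 * m ^ 2 - 5 * m + 12) / (3 * m ^ 3) := by rw [ht]; field_simp; ring
    _ ≤ 23 / 21 := by
      rw [div_le_div_iff₀ (by positivity) (by norm_num)]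
      nlinarith [mul_nonneg (sub_nonneg.2 hm) (sq_nonneg m)]
  calc (1 + 2 / m) ^ p ≤ exp t ^ p := by gcongr; exact one_add_le_exp_cubic (by positivity)
    _ = exp (p * t) := (exp_nat_mul t p).symm
    _ ≤ exp (23 / 21) := exp_le_exp.2 hpt
    _ < 599 / 200 := exp_twentythree_div_twentyone_lt

lemma four_hundred_mul_three_pow_le {m : ℝ} {p : ℕ} (hm : 21 ≤ m) (hp : 4 ≤ p) :
    400 * 3 ^ p ≤ m ^ p := calc
  400 * (3 : ℝ) ^ p ≤ 7 ^ p * 3 ^ p := by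
    gcongr; exact (by norm_num : (400 : ℝ) ≤ 7 ^ 4).trans (pow_le_pow_right₀ (by norm_num) hp)
  _ = 21 ^ p := by rw [← mul_pow]; norm_num
  _ ≤ m ^ p := by gcongr

lemma add_two_pow_add_two_mul_three_pow_lt {m : ℝ} {p : ℕ} (hm : 21 ≤ m) (hp : 4 ≤ p)
    (hpm : 2 * p ≤ m + 3) : (m + 2) ^ p + 2 * 3 ^ p < 3 * m ^ p := by
  have hratio : (m + 2) ^ p = (1 + 2 / m) ^ p * m ^ p := by
    rw [← mul_pow]; congr 1; field_simp
  have hmain := mul_lt_mul_of_pos_right (one_add_two_div_pow_lt hm hpm) (by positivity : 0 < m ^ p)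
  have hsmall := four_hundred_mul_three_pow_le hm hp
  linarith

theorem epW_lt_epK3 (p n : ℕ) (hp : 12 ≤ p) (hn : 2 * p ≤ n) :
    ((n : ℝ) - 1) ^ p + ((n : ℝ) - 1) * 3 ^ p <
      3 * ((n : ℝ) - 3) ^ p + ((n : ℝ) - 3) * 3 ^ p := by
  have hn' : (2 * p : ℝ) ≤ n := by exact_mod_cast hn
  have hp' : (12 : ℝ) ≤ p := by exact_mod_cast hp
  have key := add_two_pow_add_two_mul_three_pow_lt (m := n - 3) (p := p)
    (by linarith) (by omega) (by linarith)
  rw [show (n : ℝ) - 1 = (n - 3) + 2 by ring]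
  linarith
end

section
/- For every integer q ≥ 5, setting n = q² + q + 1, one has the identity and inequality (q+1)·q² + q²·(q+1)² − ((n−1)² + 4(n−1)) = q(q+1)(q−4) > 0. Consequently, any C_4-free graph on n = q²+q+1 vertices in which q+1 vertices have degree q and q² vertices have degree q+1 (such as the orthogonal polarity graph PG(q) for a prime power q) satisfies e_2(PG(q)) > e_2(F_n). -/
/-- `G` contains a cycle of length `k` as a subgraph. -/
def HasCycleOfLength {V : Type*} (G : SimpleGraph V) (k : ℕ) : Prop :=
  ∃ (v : V) (w : G.Walk v v), w.IsCycle ∧ w.length = k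

/-! The two prescribed degree classes already account for all `q ^ 2 + q + 1` vertices, so the
degree sequence, and with it `e₂`, is forced; it exceeds the friendship value by
`q (q + 1) (q - 4)`. -/

open Finset

section TwoValued

variable {ι α : Type*} [Fintype ι] [DecidableEq α] (f : ι → α) {a b : α}

theorem eq_or_eq_of_card_filter_add_card_filter (hab : a ≠ b)
    (hcard : #{i | f i = a} + #{i | f i = b} = Fintype.card ι) (i : ι) :
    f i = a ∨ f i = b := by
  classical
  have hdisj : Disjoint ({i | f i = a} : Finset ι) ({i | f i = b} : Finset ι) :=
    disjoint_filter.2 fun _ _ ha hb => hab (ha.symm.trans hb)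
  have huniv : ({i | f i = a ∨ f i = b} : Finset ι) = univ := by
    rw [filter_or, ← card_eq_iff_eq_univ, card_union_of_disjoint hdisj, hcard]
  simpa using huniv.ge (mem_univ i)

theorem sum_comp_eq_of_eq_or_eq {M : Type*} [AddCommMonoid M] (g : α → M) (hab : a ≠ b)
    (hf : ∀ i, f i = a ∨ f i = b) :
    ∑ i, g (f i) = #{i | f i = a} • g a + #{i | f i = b} • g b := by
  rw [← sum_fiberwise_of_maps_to (t := {a, b}) (g := f) (fun i _ => by simpa using hf i),
    sum_pair hab]
  congr 1 <;> exact (sum_congr rfl fun i hi => by rw [(mem_filter.1 hi).2]).trans (sum_const _)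

end TwoValued

theorem polarity_graph_beats_friendship (q n : ℕ) (hq : 5 ≤ q)
    (hn : n = q ^ 2 + q + 1) :
    (((q : ℤ) + 1) * q ^ 2 + q ^ 2 * ((q : ℤ) + 1) ^ 2 -
        (((n : ℤ) - 1) ^ 2 + 4 * ((n : ℤ) - 1)) =
      (q : ℤ) * (q + 1) * (q - 4)) ∧
    (0 < (q : ℤ) * (q + 1) * (q - 4)) ∧
    (∀ (G : SimpleGraph (Fin n)) [DecidableRel G.Adj], ¬ HasCycleOfLength G 4 →
      (Finset.univ.filter (fun v : Fin n => G.degree v = q)).card = q + 1 →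
      (Finset.univ.filter (fun v : Fin n => G.degree v = q + 1)).card = q ^ 2 →
      (n - 1) ^ 2 + 4 * (n - 1) < ∑ v : Fin n, G.degree v ^ 2) := by
  have hq_int : (5 : ℤ) ≤ q := by exact_mod_cast hq
  have excess : ((q : ℤ) + 1) * q ^ 2 + q ^ 2 * ((q : ℤ) + 1) ^ 2 -
      (((n : ℤ) - 1) ^ 2 + 4 * ((n : ℤ) - 1)) = (q : ℤ) * (q + 1) * (q - 4) := by
    subst hn; push_cast; ring
  have excess_pos : 0 < (q : ℤ) * (q + 1) * (q - 4) := by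
    have : (0 : ℤ) < q - 4 := by linarith
    positivity
  refine ⟨excess, excess_pos, fun G _ _ hdeg hdeg_succ => ?_⟩
  have two_degrees := eq_or_eq_of_card_filter_add_card_filter (G.degree ·) (by omega : q ≠ q + 1)
    (by rw [hdeg, hdeg_succ, Fintype.card_fin, hn]; ring)
  rw [sum_comp_eq_of_eq_or_eq (G.degree ·) (· ^ 2) (by omega) two_degrees, hdeg, hdeg_succ,
    smul_eq_mul, smul_eq_mul]
  zify [show 1 ≤ n by omega]
  linarith
end

section
/- For every integer p ≥ 3 and every integer q > 1, setting n = q² + q + 1, one has (n−1)^p + (n−1)·2^p − ((q+1)·q^p + q²·(q+1)^p) = q(q+1)·2^p + q²(q+1)·([q^{p−2} − 1][(q+1)^{p−1} − 1] − 1) > 0; that is, e_p(F_n) exceeds the degree power of any graph on n vertices with q+1 vertices of degree q and q² vertices of degree q+1. -/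
/-!
With `m = n - 1 = q(q+1)`, the product `q ^ p (q+1) ^ p = m ^ p` cancels against the leading
term of `q²(q+1) · q^(p-2) (q+1)^(p-1)`, which gives the identity. For `q ≥ 2` and `p ≥ 3` both
factors `q^(p-2) - 1` and `(q+1)^(p-1) - 1` are at least `1`, so the bracket is nonnegative and
the term `q(q+1) 2^p` makes the whole expression positive.
-/

section DegreePowerGap

variable {R : Type*}

theorem degree_power_gap_eq [CommRing R] (x : R) {p : ℕ} (hp : 2 ≤ p) :
    (x * (x + 1)) ^ p + x * (x + 1) * 2 ^ p - ((x + 1) * x ^ p + x ^ 2 * (x + 1) ^ p) =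
      x * (x + 1) * 2 ^ p + x ^ 2 * (x + 1) * ((x ^ (p - 2) - 1) * ((x + 1) ^ (p - 1) - 1) - 1) := by
  obtain ⟨k, rfl⟩ := Nat.exists_eq_add_of_le' hp
  rw [Nat.add_sub_cancel, show k + 2 - 1 = k + 1 by omega, mul_pow]
  ring

variable [CommRing R] [LinearOrder R] [IsStrictOrderedRing R]

theorem one_le_pow_sub_one {x : R} (hx : 2 ≤ x) {k : ℕ} (hk : k ≠ 0) : 1 ≤ x ^ k - 1 := by
  have := le_self_pow₀ (one_le_two.trans hx) hk
  linarith

theorem degree_power_gap_pos {x : R} (hx : 2 ≤ x) {p : ℕ} (hp : 3 ≤ p) :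
    0 < x * (x + 1) * 2 ^ p + x ^ 2 * (x + 1) * ((x ^ (p - 2) - 1) * ((x + 1) ^ (p - 1) - 1) - 1) := by
  have hx0 : 0 < x := by linarith
  have hA : 1 ≤ x ^ (p - 2) - 1 := one_le_pow_sub_one hx (by omega)
  have hB : 1 ≤ (x + 1) ^ (p - 1) - 1 := one_le_pow_sub_one (by linarith) (by omega)
  have hbracket : 0 ≤ (x ^ (p - 2) - 1) * ((x + 1) ^ (p - 1) - 1) - 1 := by nlinarith
  have hfirst : 0 < x * (x + 1) * 2 ^ p := by positivity
  have hsecond : 0 ≤ x ^ 2 * (x + 1) * ((x ^ (p - 2) - 1) * ((x + 1) ^ (p - 1) - 1) - 1) := by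
    positivity
  linarith

end DegreePowerGap

theorem friendship_beats_polarity_graph (p q n : ℕ) (hp : 3 ≤ p) (hq : 1 < q)
    (hn : n = q ^ 2 + q + 1) :
    (((n : ℤ) - 1) ^ p + ((n : ℤ) - 1) * 2 ^ p -
        (((q : ℤ) + 1) * q ^ p + q ^ 2 * ((q : ℤ) + 1) ^ p) =
      (q : ℤ) * (q + 1) * 2 ^ p +
        (q : ℤ) ^ 2 * (q + 1) *
          (((q : ℤ) ^ (p - 2) - 1) * (((q : ℤ) + 1) ^ (p - 1) - 1) - 1)) ∧
    0 < ((n : ℤ) - 1) ^ p + ((n : ℤ) - 1) * 2 ^ p -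
        (((q : ℤ) + 1) * q ^ p + q ^ 2 * ((q : ℤ) + 1) ^ p) := by
  have hm : (n : ℤ) - 1 = q * (q + 1) := by subst hn; push_cast; ring
  have hgap := degree_power_gap_eq (q : ℤ) (by omega : 2 ≤ p)
  rw [hm]
  exact ⟨hgap, hgap ▸ degree_power_gap_pos (by exact_mod_cast hq) hp⟩
end

section
/- Let p ≥ 5 be an integer. Then 2(2p−3)^p − (2p−2)^p − 2^p > 0. -/
/-- Binomial lower bound: `x^(m+1) + (m+1)*x^m ≤ (x+1)^(m+1)` over ℕ. -/
lemma aux_pow_succ_lower (x : ℕ) : ∀ m : ℕ, x^(m+1) + (m+1) * x^m ≤ (x+1)^(m+1) := by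
  intro m
  induction m with
  | zero => simp
  | succ m ih =>
      have h : (x+1)^(m+2) = (x+1) * (x+1)^(m+1) := by ring
      have h2 : (x+1) * (x^(m+1) + (m+1) * x^m) ≤ (x+1) * (x+1)^(m+1) :=
        Nat.mul_le_mul_left _ ih
      have h3 : x^(m+2) + (m+2) * x^(m+1) ≤ (x+1) * (x^(m+1) + (m+1) * x^m) := by
        have e : (x+1) * (x^(m+1) + (m+1) * x^m)
            = x^(m+2) + (m+2) * x^(m+1) + (m+1) * x^m := by ring
        rw [e]
        exact Nat.le_add_right _ _
      calc x^(m+2) + (m+2) * x^(m+1) ≤ (x+1) * (x^(m+1) + (m+1) * x^m) := h3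
        _ ≤ (x+1) * (x+1)^(m+1) := h2
        _ = (x+1)^(m+2) := h.symm

/-- Key monotonicity inequality: `(1+1/n)^(n+1)` is decreasing, in fraction-free form. -/
lemma aux_decreasing (n : ℕ) :
    (n+2)^(n+2) * n^(n+1) ≤ (n+1)^(n+2) * (n+1)^(n+1) := by
  have key := aux_pow_succ_lower (n^2 + 2*n) n
  -- RHS = (n+1) * ((n+1)^2)^(n+1) = (n+1) * (n^2+2n+1)^(n+1)
  have hrhs : (n+1)^(n+2) * (n+1)^(n+1) = (n+1) * (n^2 + 2*n + 1)^(n+1) := by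
    have h1 : (n^2 + 2*n + 1) = (n+1)^2 := by ring
    rw [h1, ← pow_mul]
    rw [show (n+1)^(n+2) = (n+1) * (n+1)^(n+1) from by ring]
    rw [mul_assoc, ← pow_add]
    ring_nf
  have hlhs : (n+2)^(n+2) * n^(n+1) = (n^2 + 2*n)^n * (n * (n+2)^2) := by
    have h1 : (n^2 + 2*n) = n * (n+2) := by ring
    rw [h1, mul_pow]
    rw [show (n+2)^(n+2) = (n+2)^n * (n+2)^2 from by rw [← pow_add]]
    rw [show n^(n+1) = n^n * n from by rw [pow_succ]]
    ring
  rw [hrhs, hlhs]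
  have hstep : (n^2 + 2*n + 1)^(n+1) ≥ (n^2+2*n)^(n+1) + (n+1) * (n^2+2*n)^n := key
  have hgoal : (n^2 + 2*n)^n * (n * (n+2)^2) ≤
      (n+1) * ((n^2+2*n)^(n+1) + (n+1) * (n^2+2*n)^n) := by
    have hx : (n^2+2*n)^(n+1) = (n^2+2*n)^n * (n^2+2*n) := by rw [pow_succ]
    rw [hx]
    have hcoef : n * (n+2)^2 ≤ (n+1) * ((n^2+2*n) + (n+1)) := by nlinarith
    calc (n^2 + 2*n)^n * (n * (n+2)^2)
        ≤ (n^2 + 2*n)^n * ((n+1) * ((n^2+2*n) + (n+1))) :=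
          Nat.mul_le_mul_left _ hcoef
      _ = (n+1) * ((n^2+2*n)^n * (n^2+2*n) + (n+1) * (n^2+2*n)^n) := by ring
  calc (n^2 + 2*n)^n * (n * (n+2)^2)
      ≤ (n+1) * ((n^2+2*n)^(n+1) + (n+1) * (n^2+2*n)^n) := hgoal
    _ ≤ (n+1) * (n^2 + 2*n + 1)^(n+1) := Nat.mul_le_mul_left _ hstep

/-- For a ≥ 7:  `7^8 * (a+1)^(a+1) ≤ 8^8 * a^(a+1)`. -/
lemma aux_chain (a : ℕ) (ha : 7 ≤ a) : 7^8 * (a+1)^(a+1) ≤ 8^8 * a^(a+1) := by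
  induction a, ha using Nat.le_induction with
  | base => norm_num
  | succ a ha ih =>
      have hB := aux_decreasing a
      have hapos : 0 < a^(a+1) := Nat.pow_pos (by omega)
      -- want : 7^8 * (a+2)^(a+2) ≤ 8^8 * (a+1)^(a+2)
      have key : 7^8 * (a+2)^(a+2) * a^(a+1) ≤ 8^8 * (a+1)^(a+2) * a^(a+1) := by
        calc 7^8 * (a+2)^(a+2) * a^(a+1) = 7^8 * ((a+2)^(a+2) * a^(a+1)) := by ring
          _ ≤ 7^8 * ((a+1)^(a+2) * (a+1)^(a+1)) := Nat.mul_le_mul_left _ hB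
          _ = (a+1)^(a+2) * (7^8 * (a+1)^(a+1)) := by ring
          _ ≤ (a+1)^(a+2) * (8^8 * a^(a+1)) := Nat.mul_le_mul_left _ ih
          _ = 8^8 * (a+1)^(a+2) * a^(a+1) := by ring
      have := Nat.le_of_mul_le_mul_right key hapos
      convert this using 2
  
/-- For a ≥ 7: `7^10 * (a+1)^(a+3) ≤ 8^10 * a^(a+3)`. -/
lemma aux_ratio (a : ℕ) (ha : 7 ≤ a) : 7^10 * (a+1)^(a+3) ≤ 8^10 * a^(a+3) := by
  have h1 := aux_chain a ha
  have h2 : 7^2 * (a+1)^2 ≤ 8^2 * a^2 := by nlinarith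
  have e1 : (a+1)^(a+3) = (a+1)^(a+1) * (a+1)^2 := by rw [← pow_add]
  have e2 : a^(a+3) = a^(a+1) * a^2 := by rw [← pow_add]
  calc 7^10 * (a+1)^(a+3) = (7^8 * (a+1)^(a+1)) * (7^2 * (a+1)^2) := by rw [e1]; ring
    _ ≤ (8^8 * a^(a+1)) * (8^2 * a^2) := Nat.mul_le_mul h1 h2
    _ = 8^10 * a^(a+3) := by rw [e2]; ring

lemma aux_seven (p : ℕ) (hp : 5 ≤ p) : 21 * 2^p ≤ 7^p := by
  induction p, hp using Nat.le_induction with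
  | base => norm_num
  | succ p hp ih =>
      calc 21 * 2^(p+1) = 2 * (21 * 2^p) := by ring
        _ ≤ 2 * 7^p := Nat.mul_le_mul_left _ ih
        _ ≤ 7 * 7^p := Nat.mul_le_mul_right _ (by norm_num)
        _ = 7^(p+1) := by rw [pow_succ]; ring

theorem h1_pos_at_left_endpoint (p : ℕ) (hp : 5 ≤ p) :
    0 < 2 * (2 * (p : ℤ) - 3) ^ p - (2 * (p : ℤ) - 2) ^ p - 2 ^ p := by
  obtain ⟨k, rfl⟩ : ∃ k, p = k + 5 := ⟨p - 5, by omega⟩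
  set p := k + 5 with hpdef
  set a : ℕ := 2 * k + 7 with hadef
  have ha7 : 7 ≤ a := by omega
  -- cast the ratio bound to ℤ
  have hratio : (7:ℤ)^10 * ((a:ℤ)+1)^(2*p) ≤ (8:ℤ)^10 * (a:ℤ)^(2*p) := by
    have h := aux_ratio a ha7
    have he : a + 3 = 2 * p := by omega
    rw [he] at h
    exact_mod_cast h
  have hA : 2 * ((p:ℕ) : ℤ) - 3 = (a:ℤ) := by push_cast [hpdef, hadef]; ring
  have hB : 2 * ((p:ℕ) : ℤ) - 2 = (a:ℤ) + 1 := by push_cast [hpdef, hadef]; ring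
  rw [hA, hB]
  set A : ℤ := (a : ℤ) with hAdef
  have hA7 : (7:ℤ) ≤ A := by rw [hAdef]; exact_mod_cast ha7
  by_contra h
  push_neg at h
  -- notation
  set X : ℤ := A ^ p with hX
  set Y : ℤ := (A+1) ^ p with hY
  set T : ℤ := (2:ℤ) ^ p with hT
  have hTpos : 0 < T := by positivity
  have hXpos : 0 < X := by positivity
  have hTX : T ≤ X := by
    have : (2:ℤ)^p ≤ A^p := pow_le_pow_left₀ (by norm_num) (by linarith) p
    simpa [hT, hX] using this
  have h21 : 21 * T ≤ X := by
    have h7 : (21:ℤ) * 2^p ≤ 7^p := by exact_mod_cast aux_seven p (by omega)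
    have h7A : (7:ℤ)^p ≤ A^p := pow_le_pow_left₀ (by norm_num) hA7 p
    calc 21 * T = 21 * 2^p := by rw [hT]
      _ ≤ 7^p := h7
      _ ≤ X := h7A
  have hYge : 2 * X - T ≤ Y := by linarith
  have h2XT : 0 ≤ 2 * X - T := by linarith
  have hsq : (2 * X - T)^2 ≤ Y^2 := by
    have := mul_self_le_mul_self h2XT hYge
    simpa [sq] using this
  have hsq2 : (7:ℤ)^10 * Y^2 ≤ (8:ℤ)^10 * X^2 := by
    have e1 : Y^2 = ((A:ℤ)+1)^(2*p) := by rw [hY, ← pow_mul, mul_comm p 2]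
    have e2 : X^2 = (A:ℤ)^(2*p) := by rw [hX, ← pow_mul, mul_comm p 2]
    rw [e1, e2]; exact hratio
  nlinarith [mul_pos hXpos hXpos, mul_pos hXpos hTpos, mul_pos hTpos hTpos,
    mul_nonneg (sub_nonneg.mpr h21) (le_of_lt hXpos), sq_nonneg T, sq_nonneg X,
    mul_le_mul_of_nonneg_left hsq (by norm_num : (0:ℤ) ≤ 7^10)]
end

section
/- Let n ≥ 6 be even and let G be a simple C_4-free graph on n vertices with m ≤ ⌊3(n−1)/2⌋ edges, minimum degree at least 1, and non-increasing degree sequence (d_1,…,d_n) with d_n = 2. Then the degree sequence of G is weakly majorized by the n-tuple (n−1, 2, …, 2, 1) and differs from it, and consequently e_p(G) < (n−1)^p + (n−2)·2^p + 1 for every integer p > 1. -/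
/-- The `n`-tuple `(n-1, 2, …, 2, 1)`: the degree sequence of the friendship
graph `F_n` for even `n`, in non-increasing order. -/
def muOne (n : ℕ) : Fin n → ℕ :=
  fun i => if i.val = 0 then n - 1 else if i.val = n - 1 then 1 else 2

open Finset in
lemma pow_smooth (p a b : ℕ) : (a+2)^p + (b+2)^p ≤ (a+b+2)^p + 2^p := by
  rcases Nat.eq_zero_or_pos p with hp | hp
  · simp [hp]
  rw [add_pow, add_pow, add_pow, ← Finset.sum_add_distrib]
  have h2 : (2:ℕ)^p = ∑ k ∈ range (p+1), (if k = 0 then (2:ℕ)^p else 0) := by simp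
  rw [h2, ← Finset.sum_add_distrib]
  apply Finset.sum_le_sum
  intro k hk
  rcases Nat.eq_zero_or_pos k with hk0 | hk0
  · subst hk0; simp
  · have h1 : a ^ k + b ^ k ≤ (a + b) ^ k :=
      pow_add_pow_le (Nat.zero_le a) (Nat.zero_le b) (by omega)
    have hif : (if k = 0 then (2:ℕ)^p else 0) = 0 := by simp; omega
    rw [hif, add_zero]
    calc a^k * 2^(p-k) * p.choose k + b^k * 2^(p-k) * p.choose k
        = (a^k + b^k) * (2^(p-k) * p.choose k) := by ring
      _ ≤ (a+b)^k * (2^(p-k) * p.choose k) := Nat.mul_le_mul_right _ h1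
      _ = (a+b)^k * 2^(p-k) * p.choose k := by ring

open Finset in
lemma pow_sum_le {ι : Type*} [DecidableEq ι] (p : ℕ) (s : Finset ι) (g : ι → ℕ)
    (hs : s.Nonempty) :
    ∑ i ∈ s, (g i + 2)^p ≤ ((∑ i ∈ s, g i) + 2)^p + (s.card - 1) * 2^p := by
  induction hs using Finset.Nonempty.cons_induction with
  | singleton a => simp
  | cons a t ha ht ih =>
    rw [Finset.sum_cons, Finset.sum_cons, Finset.card_cons]
    calc (g a + 2)^p + ∑ i ∈ t, (g i + 2)^p
        ≤ (g a + 2)^p + (((∑ i ∈ t, g i) + 2)^p + (t.card - 1) * 2^p) := by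
          exact Nat.add_le_add_left ih _
      _ = ((g a + 2)^p + ((∑ i ∈ t, g i) + 2)^p) + (t.card - 1) * 2^p := by ring
      _ ≤ ((g a + (∑ i ∈ t, g i) + 2)^p + 2^p) + (t.card - 1) * 2^p := by
          exact Nat.add_le_add_right (pow_smooth p _ _) _
      _ = (g a + (∑ i ∈ t, g i) + 2)^p + (t.card + 1 - 1) * 2^p := by
          have : t.card ≥ 1 := Finset.card_pos.mpr ht
          have h1 : t.card + 1 - 1 = (t.card - 1) + 1 := by omega
          rw [h1]; ring

open Finset in
lemma filter_lt_succ' (n s : ℕ) (h : s < n) :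
    (Finset.univ.filter (fun i : Fin n => i.val < s + 1)) =
    insert ⟨s, h⟩ (Finset.univ.filter (fun i : Fin n => i.val < s)) := by
  ext i
  simp only [Finset.mem_filter, Finset.mem_univ, true_and, Finset.mem_insert, Fin.ext_iff]
  omega

open Finset in
lemma card_filter_lt (n s : ℕ) (h : s ≤ n) :
    (Finset.univ.filter (fun i : Fin n => i.val < s)).card = s := by
  induction s with
  | zero => simp
  | succ s ih =>
    rw [filter_lt_succ' n s (by omega), Finset.card_insert_of_notMem (by simp),
      ih (by omega)]

open Finset in
lemma sum_muOne (n : ℕ) (hn : 6 ≤ n) : ∀ s, 1 ≤ s → s ≤ n →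
    ∑ i ∈ Finset.univ.filter (fun i : Fin n => i.val < s), muOne n i
      = if s = n then 3*n - 4 else n + 2*s - 3 := by
  intro s h1 h2
  induction s with
  | zero => omega
  | succ s ih =>
    rcases Nat.eq_zero_or_pos s with hs0 | hs0
    · subst hs0
      have h0 : (Finset.univ.filter (fun i : Fin n => i.val < 1)) = {(⟨0, by omega⟩ : Fin n)} := by
        ext i
        simp only [Finset.mem_filter, Finset.mem_univ, true_and, Finset.mem_singleton, Fin.ext_iff]
        omega
      rw [h0, Finset.sum_singleton]
      have : ¬ (1 = n) := by omega
      simp [muOne, this]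
    · have hsn : s < n := by omega
      rw [filter_lt_succ' n s hsn, Finset.sum_insert (by simp), ih (by omega) (by omega)]
      have hmu : muOne n ⟨s, hsn⟩ = if s = n - 1 then 1 else 2 := by
        simp [muOne]; omega
      rcases Nat.lt_or_ge (s+1) n with hlt | hge
      · have h1' : ¬ (s = n - 1) := by omega
        have h2' : ¬ (s = n) := by omega
        have h3' : ¬ (s + 1 = n) := by omega
        rw [hmu]
        simp [h1', h2', h3']
        omega
      · have hsn1 : s + 1 = n := by omega
        have h1' : s = n - 1 := by omega
        have h2' : ¬ (s = n) := by omega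
        rw [hmu, if_pos h1', if_neg h2', if_pos hsn1]
        omega

lemma numeric_final (n p : ℕ) (hn : 6 ≤ n) (hp : 1 < p) :
    (n-2)^p + (n-1) * 2^p < (n-1)^p + (n-2) * 2^p + 1 := by
  have key : (n-2)^p + 2^p ≤ (n-1)^p := by
    have h1 : (n-1)^p = (n-1) * (n-1)^(p-1) := by
      conv_lhs => rw [show p = 1 + (p-1) by omega]
      rw [pow_add, pow_one]
    have h2 : (n-2) * (n-1)^(p-1) ≥ (n-2) * (n-2)^(p-1) :=
      Nat.mul_le_mul_left _ (Nat.pow_le_pow_left (by omega) _)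
    have h3 : (n-2) * (n-2)^(p-1) = (n-2)^p := by
      conv_rhs => rw [show p = 1 + (p-1) by omega]
      rw [pow_add, pow_one]
    have h4 : (2:ℕ)^p ≤ (n-1)^(p-1) := by
      calc (2:ℕ)^p ≤ 2^(2*(p-1)) := Nat.pow_le_pow_right (by omega) (by omega)
        _ = 4^(p-1) := by rw [pow_mul]; norm_num
        _ ≤ (n-1)^(p-1) := Nat.pow_le_pow_left (by omega) _
    have h5 : (n-1) * (n-1)^(p-1) = (n-2) * (n-1)^(p-1) + (n-1)^(p-1) := by
      rw [show n - 1 = (n-2) + 1 by omega, add_mul, one_mul]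
    omega
  have h6 : (n-1) * 2^p = (n-2) * 2^p + 2^p := by
    rw [show n - 1 = (n-2) + 1 by omega, add_mul, one_mul]
  omega

theorem weak_majorization_even_case (n : ℕ) (hn : 6 ≤ n) (heven : Even n)
    (G : SimpleGraph (Fin n)) [DecidableRel G.Adj]
    (hC4 : ¬ HasCycleOfLength G 4)
    (hm : G.edgeFinset.card ≤ 3 * (n - 1) / 2)
    (hδ : ∀ v : Fin n, 1 ≤ G.degree v)
    (d : Fin n → ℕ) (hmono : Antitone d)
    (hperm : ∃ σ : Equiv.Perm (Fin n), ∀ i, d i = G.degree (σ i))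
    (hlast : d ⟨n - 1, by omega⟩ = 2) :
    (∀ s : ℕ, 1 ≤ s → s ≤ n →
      ∑ i ∈ Finset.univ.filter (fun i : Fin n => i.val < s), d i ≤
        ∑ i ∈ Finset.univ.filter (fun i : Fin n => i.val < s), muOne n i) ∧
    d ≠ muOne n ∧
    (∀ p : ℕ, 1 < p →
      (∑ v : Fin n, G.degree v ^ p) < (n - 1) ^ p + (n - 2) * 2 ^ p + 1) := by
  obtain ⟨σ, hσ⟩ := hperm
  -- total degree sum
  have hsum_d : ∑ i : Fin n, d i = ∑ v : Fin n, G.degree v :=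
    Fintype.sum_equiv σ d (fun v => G.degree v) hσ
  have hS : ∑ v : Fin n, G.degree v = 2 * G.edgeFinset.card :=
    SimpleGraph.sum_degrees_eq_twice_card_edges G
  have hSle : ∑ i : Fin n, d i ≤ 3 * n - 4 := by
    obtain ⟨k, hk⟩ := heven
    omega
  have hd2 : ∀ i : Fin n, 2 ≤ d i := by
    intro i
    have hle : i ≤ (⟨n - 1, by omega⟩ : Fin n) := by
      rw [Fin.le_def]
      have := i.isLt
      simp
      omega
    calc 2 = d ⟨n - 1, by omega⟩ := hlast.symm
      _ ≤ d i := hmono hle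
  refine ⟨?_, ?_, ?_⟩
  · -- weak majorization
    intro s hs1 hsn
    have hsplit : ∑ i ∈ Finset.univ.filter (fun i : Fin n => i.val < s), d i +
        ∑ i ∈ Finset.univ.filter (fun i : Fin n => ¬ i.val < s), d i = ∑ i : Fin n, d i :=
      Finset.sum_filter_add_sum_filter_not Finset.univ (fun i : Fin n => i.val < s) d
    have hcard : (Finset.univ.filter (fun i : Fin n => i.val < s)).card = s :=
      card_filter_lt n s hsn
    have hcards : (Finset.univ.filter (fun i : Fin n => i.val < s)).card +
        (Finset.univ.filter (fun i : Fin n => ¬ i.val < s)).card = n := by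
      have h := Finset.card_filter_add_card_filter_not
        (s := (Finset.univ : Finset (Fin n))) (p := fun i : Fin n => i.val < s)
      simpa using h
    have hge : (Finset.univ.filter (fun i : Fin n => ¬ i.val < s)).card * 2 ≤
        ∑ i ∈ Finset.univ.filter (fun i : Fin n => ¬ i.val < s), d i := by
      have := Finset.card_nsmul_le_sum
        (Finset.univ.filter (fun i : Fin n => ¬ i.val < s)) d 2 (fun i _ => hd2 i)
      simpa [smul_eq_mul] using this
    rw [sum_muOne n hn s hs1 hsn]
    split_ifs with h
    · omega
    · omega
  · -- d ≠ muOne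
    intro heq
    have h := congrFun heq ⟨n - 1, by omega⟩
    rw [hlast] at h
    have hv : muOne n (⟨n - 1, by omega⟩ : Fin n) = 1 := by
      show (if n - 1 = 0 then n - 1 else if n - 1 = n - 1 then 1 else 2) = 1
      rw [if_neg (by omega : ¬ (n - 1 = 0)), if_pos rfl]
    omega
  · -- degree power bound
    intro p hp
    have hsum_pow : ∑ v : Fin n, G.degree v ^ p = ∑ i : Fin n, d i ^ p :=
      (Fintype.sum_equiv σ (fun i => d i ^ p) (fun v => G.degree v ^ p)
        (fun i => by show d i ^ p = G.degree (σ i) ^ p; rw [hσ i])).symm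
    haveI : Nonempty (Fin n) := ⟨⟨0, by omega⟩⟩
    have hrw : ∀ i : Fin n, d i = (d i - 2) + 2 := fun i => by have := hd2 i; omega
    have hstep : ∑ i : Fin n, d i ^ p ≤
        ((∑ i : Fin n, (d i - 2)) + 2) ^ p + ((Finset.univ : Finset (Fin n)).card - 1) * 2 ^ p := by
      calc ∑ i : Fin n, d i ^ p = ∑ i : Fin n, ((d i - 2) + 2) ^ p := by
            exact Finset.sum_congr rfl (fun i _ => by rw [← hrw i])
        _ ≤ _ := pow_sum_le p Finset.univ (fun i => d i - 2) Finset.univ_nonempty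
    rw [Finset.card_univ, Fintype.card_fin] at hstep
    have hsum_g : (∑ i : Fin n, (d i - 2)) + 2 * n = ∑ i : Fin n, d i := by
      have : ∑ i : Fin n, d i = ∑ i : Fin n, ((d i - 2) + 2) :=
        Finset.sum_congr rfl (fun i _ => hrw i)
      rw [this, Finset.sum_add_distrib, Finset.sum_const, Finset.card_univ, Fintype.card_fin,
        smul_eq_mul]
      ring
    have hg_le : (∑ i : Fin n, (d i - 2)) + 2 ≤ n - 2 := by omega
    have hfinal : ∑ i : Fin n, d i ^ p ≤ (n - 2) ^ p + (n - 1) * 2 ^ p := by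
      calc ∑ i : Fin n, d i ^ p
          ≤ ((∑ i : Fin n, (d i - 2)) + 2) ^ p + (n - 1) * 2 ^ p := hstep
        _ ≤ (n - 2) ^ p + (n - 1) * 2 ^ p :=
            Nat.add_le_add_right (Nat.pow_le_pow_left hg_le p) _
    rw [hsum_pow]
    exact lt_of_le_of_lt hfinal (numeric_final n p hn hp)
end
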